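/- arXiv:0906.4642 — 8 statements merged into one kernel-verified Lean document; each statement's English description precedes it below -/
import Mathlib

section
/- Under Assumption (*), there exists a polynomial P in one variable with nonnegative real coefficients such that: if A = {±e^(1),…,±e^(k)}, then S(z_1,…,z_k) = P(∑_{j=1}^k (z_j + 1/z_j)) identically for all nonzero z_1,…,z_k; and if A = {ε_1 e^(1) + ⋯ + ε_k e^(k) : ε_j ∈ {−1,+1}}, then S(z_1,…,z_k) = P(∏_{j=1}^k (z_j + 1/z_j)) identically for all nonzero z_1,…,z_k. -/
open scoped BigOperators
open Classical

noncomputable section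

/-- Reflection in the hyperplane `x_i - x_j = 0`: swaps coordinates `i` and `j`. -/
def swapCoord {k : ℕ} (i j : Fin k) : Equiv.Perm (Fin k → ℤ) :=
  Equiv.arrowCongr (Equiv.swap i j) (Equiv.refl ℤ)

/-- Reflection in the hyperplane `x_i = 0`: negates the `i`-th coordinate. -/
def negCoord {k : ℕ} (i : Fin k) : Equiv.Perm (Fin k → ℤ) :=
  Equiv.piCongrRight fun j => if j = i then Equiv.neg ℤ else Equiv.refl ℤ

/-- The reflection group of type `B_k`, generated by the reflections in the hyperplanes
`x_i - x_j = 0` (`i < j`) and `x_1 = 0`. -/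
def BkGroup (k : ℕ) : Subgroup (Equiv.Perm (Fin k → ℤ)) :=
  Subgroup.closure
    ({g | ∃ i j : Fin k, i < j ∧ g = swapCoord i j} ∪
      {g | ∃ h : 0 < k, g = negCoord ⟨0, h⟩})

/-- The Grabiner–Magyar atomic step set `{±e⁽¹⁾, …, ±e⁽ᵏ⁾}`. -/
def stepsGM1 (k : ℕ) : Set (Fin k → ℤ) :=
  {a | ∃ i : Fin k, a = Pi.single i 1 ∨ a = -Pi.single i 1}

/-- The Grabiner–Magyar atomic step set `{ε₁e⁽¹⁾+⋯+εₖe⁽ᵏ⁾ : εⱼ ∈ {±1}}`. -/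
def stepsGM2 (k : ℕ) : Set (Fin k → ℤ) :=
  {a | ∀ j, a j = 1 ∨ a j = -1}

/-- The open Weyl chamber `0 < x₁ < ⋯ < x_k`. -/
def chamberOpen (k : ℕ) : Set (Fin k → ℤ) :=
  {x | StrictMono x ∧ ∀ j, 0 < x j}

/-- Assumption (*): `A` is one of the two Grabiner–Magyar step sets, `S` is a composite
step set over `A` closed under reflecting initial segments, and the (positive) weight `w`
is invariant under reflecting initial segments. -/
def AssumptionStar {k : ℕ} (A : Finset (Fin k → ℤ)) (S : Finset (List (Fin k → ℤ)))
    (w : List (Fin k → ℤ) → ℝ) : Prop :=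
  ((A : Set (Fin k → ℤ)) = stepsGM1 k ∨ (A : Set (Fin k → ℤ)) = stepsGM2 k) ∧
    (∀ s ∈ S, ∀ a ∈ s, a ∈ A) ∧ (∀ s ∈ S, 0 < w s) ∧
    ∀ s ∈ S, ∀ g ∈ BkGroup k, ∀ m ≤ s.length,
      ((s.take m).map (⇑g) ++ s.drop m) ∈ S ∧
        w ((s.take m).map (⇑g) ++ s.drop m) = w s

/-- The sequence of atomic steps of a walk with composite steps `f 0, f 1, …`. -/
def walkAtoms {k : ℕ} {S : Finset (List (Fin k → ℤ))} {n : ℕ}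
    (f : Fin n → {s // s ∈ S}) : List (Fin k → ℤ) :=
  (List.ofFn fun j => (f j : List (Fin k → ℤ))).flatten

/-- Generating function (weighted count) of `n`-step walks from `u` to `v`. -/
def Pn {k : ℕ} (S : Finset (List (Fin k → ℤ))) (w : List (Fin k → ℤ) → ℝ)
    (n : ℕ) (u v : Fin k → ℤ) : ℝ :=
  ∑ f : Fin n → {s // s ∈ S},
    if u + ∑ j, (f j : List (Fin k → ℤ)).sum = v then ∏ j, w (f j) else 0

/-- Generating function (weighted count) of `n`-step walks from `u` to `v`, all of whose
intermediate positions (after every atomic step) stay in the open chamber. -/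
def PnPlus {k : ℕ} (S : Finset (List (Fin k → ℤ))) (w : List (Fin k → ℤ) → ℝ)
    (n : ℕ) (u v : Fin k → ℤ) : ℝ :=
  ∑ f : Fin n → {s // s ∈ S},
    if (u + ∑ j, (f j : List (Fin k → ℤ)).sum = v) ∧
        ∀ m : ℕ, u + ((walkAtoms f).take m).sum ∈ chamberOpen k
      then ∏ j, w (f j) else 0

/-- The composite step generating function `S(z₁,…,z_k)`. -/
def compGF {k : ℕ} (S : Finset (List (Fin k → ℤ))) (w : List (Fin k → ℤ) → ℝ)
    (z : Fin k → ℂ) : ℂ :=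
  ∑ s ∈ S, (w s : ℂ) * ∏ j, z j ^ s.sum j

/-- The composite step generating function, as a function of real variables. -/
def compGFR {k : ℕ} (S : Finset (List (Fin k → ℤ))) (w : List (Fin k → ℤ) → ℝ)
    (x : Fin k → ℝ) : ℝ :=
  ∑ s ∈ S, w s * ∏ j, x j ^ s.sum j

/-- The set of maximal points of `(φ₁,…,φ_k) ↦ |S(e^{iφ₁},…,e^{iφ_k})|` in `[0,2π)^k`. -/
def maximalPoints {k : ℕ} (S : Finset (List (Fin k → ℤ))) (w : List (Fin k → ℤ) → ℝ) :
    Set (Fin k → ℝ) :=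
  {φ | (∀ j, φ j ∈ Set.Ico (0 : ℝ) (2 * Real.pi)) ∧
    ∀ ψ : Fin k → ℝ,
      ‖compGF S w fun j => Complex.exp (Complex.I * ψ j)‖ ≤
        ‖compGF S w fun j => Complex.exp (Complex.I * φ j)‖}

/-!
A Grabiner–Magyar step set `A` is a single `B_k`-orbit. Reflecting the initial segment of a
composite step that ends at its `m`-th atom, by a group element sending that atom to a prescribed
`b ∈ A`, replaces the atom by `b`; working backwards from the last atom, every sequence in `Aᵐ`
is reached from any member of `S` of length `m` without changing the weight. So `S` is a union of
full levels `Aᵐ`, the weight depends only on the length, and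
`S(z) = ∑ₘ wₘ (∑_{a ∈ A} zᵃ)ᵐ`, where `∑_{a ∈ A} zᵃ` is `∑ⱼ (zⱼ + 1/zⱼ)`, respectively
`∏ⱼ (zⱼ + 1/zⱼ)`.
-/

open Finset Polynomial

section Reflections

variable {k : ℕ}

@[simp]
lemma swapCoord_apply (i j : Fin k) (x : Fin k → ℤ) (l : Fin k) :
    swapCoord i j x l = x (Equiv.swap i j l) := rfl

@[simp]
lemma negCoord_apply (i : Fin k) (x : Fin k → ℤ) (l : Fin k) :
    negCoord i x l = if l = i then -x l else x l := by
  simp only [negCoord, Equiv.piCongrRight_apply, Pi.map_apply]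
  split_ifs <;> rfl

lemma swapCoord_mem_BkGroup (i j : Fin k) : swapCoord i j ∈ BkGroup k := by
  rcases lt_trichotomy i j with h | rfl | h
  · exact Subgroup.subset_closure (Or.inl ⟨i, j, h, rfl⟩)
  · convert one_mem (BkGroup k)
    ext
    simp
  · have hswap : swapCoord i j = swapCoord j i := by
      ext
      simp [Equiv.swap_comm]
    exact hswap ▸ Subgroup.subset_closure (Or.inl ⟨j, i, h, rfl⟩)

lemma negCoord_mem_BkGroup (i : Fin k) : negCoord i ∈ BkGroup k := by
  set i₀ : Fin k := ⟨0, i.pos⟩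
  have hconj : negCoord i = swapCoord i₀ i * negCoord i₀ * swapCoord i₀ i := by
    ext x l
    simp only [Equiv.Perm.mul_apply, swapCoord_apply, negCoord_apply, Equiv.swap_apply_def]
    split_ifs <;> simp_all
  rw [hconj]
  exact mul_mem (mul_mem (swapCoord_mem_BkGroup _ _)
    (Subgroup.subset_closure (Or.inr ⟨i.pos, rfl⟩))) (swapCoord_mem_BkGroup _ _)

def signChange : (Fin k → ℤˣ) →* Equiv.Perm (Fin k → ℤ) := MulAction.toPermHom _ _

@[simp]
lemma signChange_apply (ε : Fin k → ℤˣ) (x : Fin k → ℤ) (l : Fin k) :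
    signChange ε x l = ε l * x l := rfl

lemma signChange_mulSingle_neg_one (i : Fin k) :
    signChange (Pi.mulSingle i (-1)) = negCoord i := by
  ext x l
  rw [signChange_apply, negCoord_apply, Pi.mulSingle_apply]
  split_ifs <;> simp_all

lemma signChange_mem_BkGroup (ε : Fin k → ℤˣ) : signChange ε ∈ BkGroup k := by
  change ε ∈ (BkGroup k).comap signChange
  rw [← univ_prod_mulSingle ε]
  refine Subgroup.prod_mem _ fun i _ => Subgroup.mem_comap.mpr ?_
  rcases Int.units_eq_one_or (ε i) with h | h
  · simp [h]
  · rw [h, signChange_mulSingle_neg_one]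
    exact negCoord_mem_BkGroup i

lemma swapCoord_single (i j : Fin k) (x : ℤ) : swapCoord i j (Pi.single i x) = Pi.single j x := by
  ext l
  simp only [swapCoord_apply, Pi.single_apply, Equiv.swap_apply_eq_iff, Equiv.swap_apply_left]

lemma negCoord_single (j : Fin k) (x : ℤ) : negCoord j (Pi.single j x) = Pi.single j (-x) := by
  ext l
  by_cases h : l = j <;> simp [h]

lemma mem_stepsGM1_iff {a : Fin k → ℤ} :
    a ∈ stepsGM1 k ↔ ∃ i, ∃ ε ∈ ({1, -1} : Finset ℤ), a = Pi.single i ε := by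
  simp [stepsGM1, Pi.single_neg]

lemma exists_mem_BkGroup_apply_eq_of_mem_stepsGM1 {a b : Fin k → ℤ}
    (ha : a ∈ stepsGM1 k) (hb : b ∈ stepsGM1 k) : ∃ g ∈ BkGroup k, g a = b := by
  obtain ⟨i, ε, hε, rfl⟩ := mem_stepsGM1_iff.mp ha
  obtain ⟨j, δ, hδ, rfl⟩ := mem_stepsGM1_iff.mp hb
  by_cases hεδ : ε = δ
  · exact ⟨_, swapCoord_mem_BkGroup i j, by rw [swapCoord_single, hεδ]⟩
  · refine ⟨_, mul_mem (negCoord_mem_BkGroup j) (swapCoord_mem_BkGroup i j), ?_⟩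
    rw [Equiv.Perm.mul_apply, swapCoord_single, negCoord_single]
    congr
    simp only [mem_insert, mem_singleton] at hε hδ
    omega

lemma exists_mem_BkGroup_apply_eq_of_mem_stepsGM2 {a b : Fin k → ℤ}
    (ha : a ∈ stepsGM2 k) (hb : b ∈ stepsGM2 k) : ∃ g ∈ BkGroup k, g a = b := by
  refine ⟨signChange fun l => if a l = b l then 1 else -1, signChange_mem_BkGroup _, ?_⟩
  ext l
  rw [signChange_apply]
  rcases ha l with h | h <;> rcases hb l with h' | h' <;> simp [h, h']

end Reflections

section Saturation

variable {α β : Type*} {G : Subgroup (Equiv.Perm α)} {A : Finset α} {S : Finset (List α)}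
  {w : List α → β}

def PrefixInvariant (G : Subgroup (Equiv.Perm α)) (S : Finset (List α)) (w : List α → β) :
    Prop :=
  ∀ s ∈ S, ∀ g ∈ G, ∀ m ≤ s.length,
    ((s.take m).map (⇑g) ++ s.drop m) ∈ S ∧ w ((s.take m).map (⇑g) ++ s.drop m) = w s

def IsLevelSaturated (A : Finset α) (S : Finset (List α)) (w : List α → β) : Prop :=
  ∀ s ∈ S, ∀ t : List α, t.length = s.length → (∀ b ∈ t, b ∈ A) → t ∈ S ∧ w t = w s

lemma PrefixInvariant.map_append (hS : PrefixInvariant G S w) {p r : List α} (hpr : p ++ r ∈ S)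
    {g : Equiv.Perm α} (hg : g ∈ G) : p.map g ++ r ∈ S ∧ w (p.map g ++ r) = w (p ++ r) := by
  simpa using hS _ hpr g hg p.length (by simp)

lemma PrefixInvariant.append_mem (hS : PrefixInvariant G S w) (hSA : ∀ s ∈ S, ∀ a ∈ s, a ∈ A)
    (htrans : ∀ a ∈ A, ∀ b ∈ A, ∃ g ∈ G, g a = b) {q : List α} (hq : ∀ b ∈ q, b ∈ A) :
    ∀ {p r : List α}, p ++ r ∈ S → p.length = q.length →
      q ++ r ∈ S ∧ w (q ++ r) = w (p ++ r) := by
  induction q using List.reverseRecOn with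
  | nil =>
    intro p r hpr hp
    obtain rfl := List.length_eq_zero_iff.mp hp
    exact ⟨hpr, rfl⟩
  | append_singleton q b ih =>
    intro p r hpr hp
    obtain ⟨p, a, rfl⟩ : ∃ p' a, p = p' ++ [a] := by
      rcases List.eq_nil_or_concat p with rfl | ⟨p', a, rfl⟩
      · simp at hp
      · exact ⟨p', a, List.concat_eq_append⟩
    obtain ⟨g, hg, rfl⟩ := htrans a (hSA _ hpr a (by simp)) b (hq b (by simp))
    obtain ⟨hmem, hw⟩ := hS.map_append hpr hg
    simp only [List.map_append, List.map_singleton, List.append_assoc] at hmem hw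
    obtain ⟨hmem', hw'⟩ := ih (fun x hx => hq x (by simp [hx])) hmem (by simpa using hp)
    simp only [List.append_assoc] at hw ⊢
    exact ⟨hmem', hw'.trans hw⟩

lemma PrefixInvariant.isLevelSaturated (hS : PrefixInvariant G S w)
    (hSA : ∀ s ∈ S, ∀ a ∈ s, a ∈ A) (htrans : ∀ a ∈ A, ∀ b ∈ A, ∃ g ∈ G, g a = b) :
    IsLevelSaturated A S w := fun s hs t hlen ht => by
  simpa using hS.append_mem hSA htrans ht (r := []) (by simpa using hs) hlen.symm

end Saturation

section LengthPoly

variable {α : Type*} {A : Finset α} {S : Finset (List α)} {w : List α → ℝ}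

/-- On a level-saturated `S` the coefficient of `X ^ m` is the common weight of the lists of
length `m` in `S`, since the level `Aᵐ` has `#A ^ m` elements. -/
def lengthPoly (A : Finset α) (S : Finset (List α)) (w : List α → ℝ) : ℝ[X] :=
  ∑ s ∈ S, C (w s / (#A : ℝ) ^ s.length) * X ^ s.length

lemma coeff_lengthPoly_nonneg (hw : ∀ s ∈ S, 0 ≤ w s) (i : ℕ) :
    0 ≤ (lengthPoly A S w).coeff i := by
  simp only [lengthPoly, finsetSum_coeff, coeff_C_mul_X_pow]
  refine sum_nonneg fun s hs => ?_
  split_ifs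
  · exact div_nonneg (hw s hs) (by positivity)
  · exact le_rfl

namespace IsLevelSaturated

variable (hS : IsLevelSaturated A S w) (hSA : ∀ s ∈ S, ∀ a ∈ s, a ∈ A) {m : ℕ}
  {s₀ : List α} (hs₀ : s₀ ∈ S) (hlen : s₀.length = m)
include hS hSA hs₀ hlen

lemma filter_length_eq :
    S.filter (·.length = m) = (Fintype.piFinset fun _ : Fin m => A).image List.ofFn := by
  ext s
  simp only [mem_filter, mem_image, Fintype.mem_piFinset]
  constructor
  · rintro ⟨hs, rfl⟩
    exact ⟨fun i => s[i], fun i => hSA s hs _ (List.getElem_mem _), List.ofFn_getElem⟩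
  · rintro ⟨f, hf, rfl⟩
    refine ⟨(hS s₀ hs₀ _ (by simp [hlen]) ?_).1, List.length_ofFn⟩
    simpa [List.mem_ofFn] using hf

lemma card_filter_length : #(S.filter (·.length = m)) = #A ^ m := by
  rw [hS.filter_length_eq hSA hs₀ hlen, card_image_of_injective _ List.ofFn_injective,
    Fintype.card_piFinset_const]

lemma sum_prod_map_filter_length {K : Type*} [CommSemiring K] (f : α → K) :
    ∑ s ∈ S.filter (·.length = m), (s.map f).prod = (∑ a ∈ A, f a) ^ m := by
  rw [hS.filter_length_eq hSA hs₀ hlen, sum_image fun _ _ _ _ h => List.ofFn_injective h,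
    ← Fin.prod_const, prod_univ_sum]
  simp [List.map_ofFn, List.prod_ofFn]

end IsLevelSaturated

theorem IsLevelSaturated.sum_mul_prod_map_eq_aeval {K : Type*} [CommSemiring K] [Algebra ℝ K]
    (hS : IsLevelSaturated A S w) (hSA : ∀ s ∈ S, ∀ a ∈ s, a ∈ A) (f : α → K) :
    ∑ s ∈ S, algebraMap ℝ K (w s) * (s.map f).prod = aeval (∑ a ∈ A, f a) (lengthPoly A S w) := by
  simp only [lengthPoly, map_sum, map_mul, aeval_C, map_pow, aeval_X]
  have hmaps : ∀ s ∈ S, s.length ∈ S.image List.length := fun s hs => mem_image_of_mem _ hs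
  rw [← sum_fiberwise_of_maps_to hmaps, ← sum_fiberwise_of_maps_to hmaps]
  refine sum_congr rfl fun m hm => ?_
  obtain ⟨s₀, hs₀, hlen⟩ := mem_image.mp hm
  have hw : ∀ s ∈ S.filter (·.length = m), w s = w s₀ := fun s hs => by
    rw [mem_filter] at hs
    exact (hS s₀ hs₀ s (hs.2.trans hlen.symm) (hSA s hs.1)).2
  have hcard : (#A : ℝ) ^ m ≠ 0 := by
    have hpos : 0 < #(S.filter (·.length = m)) := card_pos.mpr ⟨s₀, mem_filter.mpr ⟨hs₀, hlen⟩⟩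
    rw [hS.card_filter_length hSA hs₀ hlen] at hpos
    exact_mod_cast hpos.ne'
  set Y := ∑ a ∈ A, f a
  calc ∑ s ∈ S.filter (·.length = m), algebraMap ℝ K (w s) * (s.map f).prod
      = ∑ s ∈ S.filter (·.length = m), algebraMap ℝ K (w s₀) * (s.map f).prod :=
        sum_congr rfl fun s hs => by rw [hw s hs]
    _ = algebraMap ℝ K (w s₀) * Y ^ m := by
        rw [← mul_sum, hS.sum_prod_map_filter_length hSA hs₀ hlen]
    _ = ∑ s ∈ S.filter (·.length = m), algebraMap ℝ K (w s₀ / (#A : ℝ) ^ m) * Y ^ m := by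
        rw [sum_const, hS.card_filter_length hSA hs₀ hlen, ← Nat.cast_smul_eq_nsmul ℝ,
          Algebra.smul_def, ← mul_assoc, ← map_mul, Nat.cast_pow, mul_div_cancel₀ _ hcard]
    _ = ∑ s ∈ S.filter (·.length = m), algebraMap ℝ K (w s / (#A : ℝ) ^ s.length) * Y ^ s.length :=
        sum_congr rfl fun s hs => by rw [hw s hs, (mem_filter.mp hs).2]

end LengthPoly

section StepGeneratingFunctions

variable {k : ℕ} {K : Type*} [Field K]

lemma prod_zpow_list_sum {z : Fin k → K} (hz : ∀ j, z j ≠ 0) (s : List (Fin k → ℤ)) :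
    ∏ j, z j ^ s.sum j = (s.map fun a => ∏ j, z j ^ a j).prod := by
  induction s with
  | nil => simp
  | cons a s ih => simp [zpow_add₀ (hz _), prod_mul_distrib, ih]

lemma sum_zpow_one_neg_one (x : K) : ∑ ε ∈ ({1, -1} : Finset ℤ), x ^ ε = x + x⁻¹ := by
  rw [sum_pair (by decide), zpow_one, zpow_neg_one]

lemma stepsGM1_eq_image : stepsGM1 k =
    ↑((univ ×ˢ ({1, -1} : Finset ℤ)).image fun p => (Pi.single p.1 p.2 : Fin k → ℤ)) := by
  ext a
  simp [mem_stepsGM1_iff, eq_comm, exists_or]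

lemma stepsGM2_eq_piFinset :
    stepsGM2 k = ↑(Fintype.piFinset fun _ : Fin k => ({1, -1} : Finset ℤ)) := by
  ext a
  simp [stepsGM2]

lemma sum_prod_zpow_of_coe_eq_stepsGM1 {A : Finset (Fin k → ℤ)}
    (hA : (A : Set (Fin k → ℤ)) = stepsGM1 k) (z : Fin k → K) :
    ∑ a ∈ A, ∏ j, z j ^ a j = ∑ j, (z j + (z j)⁻¹) := by
  have hinj : Set.InjOn (fun p : Fin k × ℤ => (Pi.single p.1 p.2 : Fin k → ℤ))
      (univ ×ˢ ({1, -1} : Finset ℤ) : Finset (Fin k × ℤ)) := by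
    rintro ⟨i, ε⟩ hε ⟨j, δ⟩ - h
    have hε0 : ε ≠ 0 := by
      simp only [coe_product, coe_univ, Set.mem_prod, Set.mem_univ, coe_insert, coe_singleton,
        Set.mem_insert_iff, Set.mem_singleton_iff, true_and] at hε
      omega
    obtain rfl : i = j := by
      by_contra hij
      exact hε0 (by simpa [hij] using congrFun h i)
    simpa using h
  rw [coe_injective (hA.trans stepsGM1_eq_image), sum_image hinj, sum_product]
  refine sum_congr rfl fun i _ => ?_
  rw [← sum_zpow_one_neg_one]
  refine sum_congr rfl fun ε _ => ?_
  rw [prod_eq_single i (fun j _ hj => by simp [hj]) (by simp)]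
  simp

lemma sum_prod_zpow_of_coe_eq_stepsGM2 {A : Finset (Fin k → ℤ)}
    (hA : (A : Set (Fin k → ℤ)) = stepsGM2 k) (z : Fin k → K) :
    ∑ a ∈ A, ∏ j, z j ^ a j = ∏ j, (z j + (z j)⁻¹) := by
  rw [coe_injective (hA.trans stepsGM2_eq_piFinset)]
  simp_rw [← sum_zpow_one_neg_one, prod_univ_sum]

end StepGeneratingFunctions

theorem compGF_structure_general {k : ℕ}
    (A : Finset (Fin k → ℤ)) (S : Finset (List (Fin k → ℤ))) (w : List (Fin k → ℤ) → ℝ)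
    (hstar : AssumptionStar A S w) :
    ∃ P : Polynomial ℝ, (∀ i, 0 ≤ P.coeff i) ∧
      ((A : Set (Fin k → ℤ)) = stepsGM1 k →
        ∀ z : Fin k → ℂ, (∀ j, z j ≠ 0) →
          compGF S w z = Polynomial.aeval (∑ j, (z j + (z j)⁻¹)) P) ∧
      ((A : Set (Fin k → ℤ)) = stepsGM2 k →
        ∀ z : Fin k → ℂ, (∀ j, z j ≠ 0) →
          compGF S w z = Polynomial.aeval (∏ j, (z j + (z j)⁻¹)) P) := by
  obtain ⟨hA, hSA, hw, hinv⟩ := hstar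
  have htrans : ∀ a ∈ A, ∀ b ∈ A, ∃ g ∈ BkGroup k, g a = b := by
    intro a ha b hb
    rw [← mem_coe] at ha hb
    rcases hA with hA | hA <;> rw [hA] at ha hb
    · exact exists_mem_BkGroup_apply_eq_of_mem_stepsGM1 ha hb
    · exact exists_mem_BkGroup_apply_eq_of_mem_stepsGM2 ha hb
  have hsat : IsLevelSaturated A S w := PrefixInvariant.isLevelSaturated hinv hSA htrans
  have hcompGF : ∀ z : Fin k → ℂ, (∀ j, z j ≠ 0) →
      compGF S w z = aeval (∑ a ∈ A, ∏ j, z j ^ a j) (lengthPoly A S w) := by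
    intro z hz
    simp only [compGF, prod_zpow_list_sum hz, ← hsat.sum_mul_prod_map_eq_aeval hSA,
      Complex.coe_algebraMap]
  refine ⟨lengthPoly A S w, coeff_lengthPoly_nonneg fun s hs => (hw s hs).le,
    fun hA1 z hz => ?_, fun hA2 z hz => ?_⟩
  · rw [hcompGF z hz, sum_prod_zpow_of_coe_eq_stepsGM1 hA1]
  · rw [hcompGF z hz, sum_prod_zpow_of_coe_eq_stepsGM2 hA2]

/-- Lemma `lem:step_gen_fun_structure_typeC`: under Assumption (*), the
composite step generating function is a polynomial with nonnegative coefficients in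
`∑ⱼ (zⱼ + 1/zⱼ)`, respectively in `∏ⱼ (zⱼ + 1/zⱼ)`. -/
theorem compGF_structure {k : ℕ} (hk : 0 < k)
    (A : Finset (Fin k → ℤ)) (S : Finset (List (Fin k → ℤ))) (w : List (Fin k → ℤ) → ℝ)
    (hstar : AssumptionStar A S w) :
    ∃ P : Polynomial ℝ, (∀ i, 0 ≤ P.coeff i) ∧
      ((A : Set (Fin k → ℤ)) = stepsGM1 k →
        ∀ z : Fin k → ℂ, (∀ j, z j ≠ 0) →
          compGF S w z = Polynomial.aeval (∑ j, (z j + (z j)⁻¹)) P) ∧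
      ((A : Set (Fin k → ℤ)) = stepsGM2 k →
        ∀ z : Fin k → ℂ, (∀ j, z j ≠ 0) →
          compGF S w z = Polynomial.aeval (∏ j, (z j + (z j)⁻¹)) P) :=
  compGF_structure_general A S w hstar

end
end

section
/- Let P be a nonconstant polynomial in one variable with nonnegative real coefficients, let k ≥ 1, and let S(z_1,…,z_k) be either P(∑_{j=1}^k (z_j + 1/z_j)) or P(∏_{j=1}^k (z_j + 1/z_j)). Then for all (φ_1,…,φ_k) ∈ ℝ^k one has |S(e^{iφ_1},…,e^{iφ_k})| ≤ S(1,…,1); moreover, if equality |S(e^{iφ_1},…,e^{iφ_k})| = S(1,…,1) holds, then e^{iφ_j} ∈ {1, −1} for every j (i.e., every maximal point of (φ_1,…,φ_k) ↦ |S(e^{iφ_1},…,e^{iφ_k})| lies, modulo 2π, in the set {0,π}^k, while (0,…,0) is always a maximal point). -/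
/-! On the torus each factor `z + z⁻¹ = 2 Re z` has modulus at most `2`, with equality exactly
at `z = ±1`. Hence the argument `w` at which `P` is evaluated satisfies `‖w‖ ≤ M`, where
`M = 2k` or `M = 2^k`, strictly unless every `z_j = ±1`. A polynomial with nonnegative
coefficients satisfies `‖P(w)‖ ≤ P(‖w‖)` and is strictly increasing on `[0, ∞)` when
nonconstant, so `‖P(w)‖ ≤ P(M)`, strictly off `{±1}^k`. -/

open Complex Polynomial

namespace Complex

variable {z : ℂ}

theorem norm_add_inv_of_norm_eq_one (hz : ‖z‖ = 1) : ‖z + z⁻¹‖ = 2 * |z.re| := by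
  rw [inv_eq_conj hz, add_conj, norm_real, Real.norm_eq_abs, abs_mul, abs_two]

theorem norm_add_inv_le_two (hz : ‖z‖ = 1) : ‖z + z⁻¹‖ ≤ 2 := by
  rw [norm_add_inv_of_norm_eq_one hz]
  linarith [abs_re_le_norm z]

theorem norm_add_inv_lt_two (hz : ‖z‖ = 1) (h₁ : z ≠ 1) (h₂ : z ≠ -1) : ‖z + z⁻¹‖ < 2 := by
  rw [norm_add_inv_of_norm_eq_one hz]
  suffices |z.re| ≠ 1 by linarith [lt_of_le_of_ne ((abs_re_le_norm z).trans_eq hz) this]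
  intro hre
  have him : z.im = 0 := by
    have := sq_norm_sub_sq_re z
    rw [hz, ← sq_abs z.re, hre] at this
    exact pow_eq_zero_iff two_ne_zero |>.mp (by linarith)
  rcases (abs_eq zero_le_one).mp hre with hre | hre
  · exact h₁ (ext (by simp [hre]) (by simp [him]))
  · exact h₂ (ext (by simp [hre]) (by simp [him]))

end Complex

section BoundedFamily

variable {ι : Type*} [Fintype ι] {c : ℝ}

theorem norm_sum_le_card_mul {E : Type*} [SeminormedAddCommGroup E] {u : ι → E}
    (h : ∀ i, ‖u i‖ ≤ c) : ‖∑ i, u i‖ ≤ Fintype.card ι * c :=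
  (norm_sum_le _ _).trans <| by
    simpa using Finset.sum_le_sum fun i (_ : i ∈ Finset.univ) => h i

theorem norm_sum_lt_card_mul {E : Type*} [SeminormedAddCommGroup E] {u : ι → E}
    (h : ∀ i, ‖u i‖ ≤ c) (hlt : ∃ i, ‖u i‖ < c) : ‖∑ i, u i‖ < Fintype.card ι * c :=
  (norm_sum_le _ _).trans_lt <| by
    obtain ⟨j, hj⟩ := hlt
    simpa using Finset.sum_lt_sum (fun i (_ : i ∈ Finset.univ) => h i) ⟨j, Finset.mem_univ j, hj⟩

variable {𝕜 : Type*} [NormedField 𝕜] {u : ι → 𝕜}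

theorem norm_prod_le_pow_card (h : ∀ i, ‖u i‖ ≤ c) : ‖∏ i, u i‖ ≤ c ^ Fintype.card ι := by
  rw [norm_prod, ← Finset.card_univ, ← Finset.prod_const]
  exact Finset.prod_le_prod (fun i _ => norm_nonneg _) fun i _ => h i

theorem norm_prod_lt_pow_card (h : ∀ i, ‖u i‖ ≤ c) (hlt : ∃ i, ‖u i‖ < c) :
    ‖∏ i, u i‖ < c ^ Fintype.card ι := by
  classical
  obtain ⟨j, hj⟩ := hlt
  have hc : 0 < c := (norm_nonneg _).trans_lt hj
  rw [norm_prod, ← Finset.card_univ, ← Finset.prod_const,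
    ← Finset.mul_prod_erase _ _ (Finset.mem_univ j), ← Finset.mul_prod_erase _ _ (Finset.mem_univ j)]
  calc ‖u j‖ * ∏ i ∈ Finset.univ.erase j, ‖u i‖
      ≤ ‖u j‖ * ∏ i ∈ Finset.univ.erase j, c :=
        mul_le_mul_of_nonneg_left
          (Finset.prod_le_prod (fun i _ => norm_nonneg _) fun i _ => h i) (norm_nonneg _)
    _ < c * ∏ i ∈ Finset.univ.erase j, c :=
        mul_lt_mul_of_pos_right hj (Finset.prod_pos fun _ _ => hc)

end BoundedFamily

namespace Polynomial

variable {P : ℝ[X]}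

theorem eval_le_eval_of_coeff_nonneg (hP : ∀ i, 0 ≤ P.coeff i) {x y : ℝ} (hx : 0 ≤ x)
    (hxy : x ≤ y) : P.eval x ≤ P.eval y := by
  rw [eval_eq_sum_range, eval_eq_sum_range]
  exact Finset.sum_le_sum fun i _ => mul_le_mul_of_nonneg_left (pow_le_pow_left₀ hx hxy i) (hP i)

theorem eval_lt_eval_of_coeff_nonneg (hP : ∀ i, 0 ≤ P.coeff i) (hPnc : P.natDegree ≠ 0)
    {x y : ℝ} (hx : 0 ≤ x) (hxy : x < y) : P.eval x < P.eval y := by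
  rw [eval_eq_sum_range, eval_eq_sum_range]
  have hlead : 0 < P.coeff P.natDegree :=
    (hP _).lt_of_ne' <| leadingCoeff_ne_zero.mpr <| by rintro rfl; exact hPnc natDegree_zero
  refine Finset.sum_lt_sum
    (fun i _ => mul_le_mul_of_nonneg_left (pow_le_pow_left₀ hx hxy.le i) (hP i))
    ⟨P.natDegree, Finset.self_mem_range_succ _, ?_⟩
  exact mul_lt_mul_of_pos_left (pow_lt_pow_left₀ hxy hx hPnc) hlead

variable {A : Type*} [SeminormedRing A] [NormedAlgebra ℝ A] [NormOneClass A]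

theorem norm_aeval_le_eval_norm (hP : ∀ i, 0 ≤ P.coeff i) (w : A) :
    ‖aeval w P‖ ≤ P.eval ‖w‖ := by
  rw [aeval_eq_sum_range, eval_eq_sum_range]
  refine (norm_sum_le _ _).trans <| Finset.sum_le_sum fun i _ => ?_
  rw [norm_smul, Real.norm_of_nonneg (hP i)]
  exact mul_le_mul_of_nonneg_left (norm_pow_le w i) (hP i)

theorem norm_aeval_le_eval (hP : ∀ i, 0 ≤ P.coeff i) {w : A} {M : ℝ} (h : ‖w‖ ≤ M) :
    ‖aeval w P‖ ≤ P.eval M :=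
  (norm_aeval_le_eval_norm hP w).trans (eval_le_eval_of_coeff_nonneg hP (norm_nonneg w) h)

theorem norm_aeval_lt_eval (hP : ∀ i, 0 ≤ P.coeff i) (hPnc : P.natDegree ≠ 0) {w : A} {M : ℝ}
    (h : ‖w‖ < M) : ‖aeval w P‖ < P.eval M :=
  (norm_aeval_le_eval_norm hP w).trans_lt (eval_lt_eval_of_coeff_nonneg hP hPnc (norm_nonneg w) h)

end Polynomial

theorem compGF_torus_maxima_general (k : ℕ) (P : Polynomial ℝ)
    (hP : ∀ i, 0 ≤ P.coeff i) (hPnc : P.natDegree ≠ 0)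
    (Sfun : (Fin k → ℂ) → ℂ) (s1 : ℝ)
    (hcase :
      ((∀ z : Fin k → ℂ, (∀ j, z j ≠ 0) →
          Sfun z = Polynomial.aeval (∑ j, (z j + (z j)⁻¹)) P) ∧
        s1 = P.eval (2 * (k : ℝ))) ∨
      ((∀ z : Fin k → ℂ, (∀ j, z j ≠ 0) →
          Sfun z = Polynomial.aeval (∏ j, (z j + (z j)⁻¹)) P) ∧
        s1 = P.eval ((2 : ℝ) ^ k))) :
    ∀ φ : Fin k → ℝ,
      ‖Sfun fun j => Complex.exp (Complex.I * φ j)‖ ≤ s1 ∧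
      (‖Sfun fun j => Complex.exp (Complex.I * φ j)‖ = s1 →
        ∀ j, Complex.exp (Complex.I * φ j) = 1 ∨
          Complex.exp (Complex.I * φ j) = -1) := by
  intro φ
  set z : Fin k → ℂ := fun j => exp (I * φ j)
  have hz : ∀ j, ‖z j‖ = 1 := fun j => norm_exp_I_mul_ofReal (φ j)
  have hu : ∀ j, ‖z j + (z j)⁻¹‖ ≤ 2 := fun j => norm_add_inv_le_two (hz j)
  obtain ⟨w, M, hSw, hs1, hle, hlt⟩ : ∃ (w : ℂ) (M : ℝ), Sfun z = aeval w P ∧ s1 = P.eval M ∧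
      ‖w‖ ≤ M ∧ ((∃ j, ‖z j + (z j)⁻¹‖ < 2) → ‖w‖ < M) := by
    have hz0 : ∀ j, z j ≠ 0 := fun j => exp_ne_zero _
    rcases hcase with ⟨hS, hs1⟩ | ⟨hS, hs1⟩
    · refine ⟨_, _, hS z hz0, hs1, ?_, fun hlt => ?_⟩
      · simpa [mul_comm] using norm_sum_le_card_mul hu
      · simpa [mul_comm] using norm_sum_lt_card_mul hu hlt
    · refine ⟨_, _, hS z hz0, hs1, ?_, fun hlt => ?_⟩
      · simpa using norm_prod_le_pow_card hu
      · simpa using norm_prod_lt_pow_card hu hlt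
  rw [hSw, hs1]
  refine ⟨norm_aeval_le_eval hP hle, fun heq j => ?_⟩
  by_contra! hj
  exact (norm_aeval_lt_eval hP hPnc (hlt ⟨j, norm_add_inv_lt_two (hz j) hj.1 hj.2⟩)).ne heq

/-- Lemma `lem:step_gen_fun_maxima`: for a type-`B` composite step
generating function `S`, the torus maximum of `|S|` is attained at `(0,…,0)`, i.e.
`|S(e^{iφ₁},…,e^{iφ_k})| ≤ S(1,…,1)`, and every maximal point satisfies
`e^{iφⱼ} ∈ {1,-1}` for all `j`. Here `s1 = S(1,…,1)`, which equals `P(2k)` in the first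
case and `P(2^k)` in the second case. -/
theorem compGF_torus_maxima (k : ℕ) (hk : 0 < k) (P : Polynomial ℝ)
    (hP : ∀ i, 0 ≤ P.coeff i) (hPnc : P.natDegree ≠ 0)
    (Sfun : (Fin k → ℂ) → ℂ) (s1 : ℝ)
    (hcase :
      ((∀ z : Fin k → ℂ, (∀ j, z j ≠ 0) →
          Sfun z = Polynomial.aeval (∑ j, (z j + (z j)⁻¹)) P) ∧
        s1 = P.eval (2 * (k : ℝ))) ∨
      ((∀ z : Fin k → ℂ, (∀ j, z j ≠ 0) →
          Sfun z = Polynomial.aeval (∏ j, (z j + (z j)⁻¹)) P) ∧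
        s1 = P.eval ((2 : ℝ) ^ k))) :
    ∀ φ : Fin k → ℝ,
      ‖Sfun fun j => Complex.exp (Complex.I * φ j)‖ ≤ s1 ∧
      (‖Sfun fun j => Complex.exp (Complex.I * φ j)‖ = s1 →
        ∀ j, Complex.exp (Complex.I * φ j) = 1 ∨
          Complex.exp (Complex.I * φ j) = -1) :=
  compGF_torus_maxima_general k P hP hPnc Sfun s1 hcase
end

section
/- Let P be a nonconstant polynomial in one variable with nonnegative real coefficients and let k ≥ 1. Set S(z_1,…,z_k) = P(∑_{j=1}^k (z_j + 1/z_j)) and Λ = 2·P'(2k)/P(2k) in the first case, or S(z_1,…,z_k) = P(∏_{j=1}^k (z_j + 1/z_j)) and Λ = 2^k·P'(2^k)/P(2^k) in the second case (assuming P(2k) > 0, respectively P(2^k) > 0). Then there exist constants C > 0 and δ > 0 such that for all (φ_1,…,φ_k) ∈ ℝ^k with max_j |φ_j| < δ one has S(e^{iφ_1},…,e^{iφ_k}) ≠ 0 and | log|S(e^{iφ_1},…,e^{iφ_k})| − log S(1,…,1) + (Λ/2)·∑_{j=1}^k φ_j² | ≤ C · (max_j |φ_j|)⁴. -/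
/-! On the torus `S(e^{iφ}) = P(g φ)` with the real function `g φ = ∑ⱼ 2 cos φⱼ`, resp.
`g φ = ∏ⱼ 2 cos φⱼ`. From `cos x = 1 - x²/2 + O(x⁴)` one gets `g φ - t₀ = O(‖φ‖²)` and
`g φ - t₀ + c ∑ⱼ φⱼ² = O(‖φ‖⁴)`, where `(t₀, c) = (2k, 1)`, resp. `(2^k, 2^k/2)`, and `‖φ‖`
is the sup norm. Expanding `log ∘ P` to first order at `t₀` leaves a remainder
`O((g φ - t₀)²) = O(‖φ‖⁴)`, and the first-order term is `-c (P'/P)(t₀) ∑ⱼ φⱼ²` up to `O(‖φ‖⁴)`. -/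

open Asymptotics Filter Topology Real Polynomial

theorem isBigO_sub_sub_mul_deriv {f f' : ℝ → ℝ} {x₀ : ℝ}
    (hf : ∀ᶠ x in 𝓝 x₀, HasDerivAt f (f' x) x) (hf' : DifferentiableAt ℝ f' x₀) :
    (fun x => f x - f x₀ - f' x₀ * (x - x₀)) =O[𝓝 x₀] fun x => (x - x₀) ^ 2 := by
  obtain ⟨c, hc0, hc⟩ := hf'.isBigO_sub.exists_pos
  obtain ⟨ε, hε, hball⟩ := Metric.eventually_nhds_iff_ball.1 (hf.and hc.bound)
  refine IsBigO.of_bound c (Metric.eventually_nhds_iff_ball.2 ⟨ε, hε, fun x hx => ?_⟩)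
  set s := Metric.closedBall x₀ |x - x₀|
  have hsub : s ⊆ Metric.ball x₀ ε :=
    Metric.closedBall_subset_ball (by simpa [Real.dist_eq] using hx)
  have hderiv : ∀ y ∈ s, HasDerivWithinAt
      (fun y => f y - f x₀ - f' x₀ * (y - x₀)) (f' y - f' x₀) s y := fun y hy =>
    (((hball y (hsub hy)).1.sub_const (f x₀)).fun_sub
      (((hasDerivAt_id y).sub_const x₀).const_mul (f' x₀)) |>.congr_deriv (by simp)).hasDerivWithinAt
  have hbound : ∀ y ∈ s, ‖f' y - f' x₀‖ ≤ c * |x - x₀| := fun y hy =>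
    (hball y (hsub hy)).2.trans
      (mul_le_mul_of_nonneg_left (by simpa [Real.dist_eq] using Metric.mem_closedBall.1 hy) hc0.le)
  have := (convex_closedBall x₀ _).norm_image_sub_le_of_norm_hasDerivWithin_le (y := x) hderiv
    hbound (Metric.mem_closedBall_self (abs_nonneg _)) (by simp [s, Real.dist_eq])
  simpa [mul_assoc, ← sq] using this

theorem Polynomial.isBigO_log_eval_sub_sub (P : ℝ[X]) {t₀ : ℝ} (h : P.eval t₀ ≠ 0) :
    (fun t => log (P.eval t) - log (P.eval t₀) -
      P.derivative.eval t₀ / P.eval t₀ * (t - t₀)) =O[𝓝 t₀] fun t => (t - t₀) ^ 2 :=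
  isBigO_sub_sub_mul_deriv (f' := fun t => P.derivative.eval t / P.eval t)
    ((P.continuous.continuousAt.eventually_ne h).mono fun _ ht => (P.hasDerivAt _).log ht)
    (P.derivative.differentiableAt.div P.differentiableAt h)

theorem isBigO_log_eval_comp_sub_add {α : Type*} {l : Filter α} (P : ℝ[X]) {t₀ c : ℝ}
    (hP : P.eval t₀ ≠ 0) {g Q ρ : α → ℝ} (hρ : Tendsto ρ l (𝓝 0))
    (hg : (fun x => g x - t₀) =O[l] ρ)
    (hgQ : (fun x => g x - t₀ + c * Q x) =O[l] fun x => ρ x ^ 2) :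
    (fun x => log (P.eval (g x)) - log (P.eval t₀) +
      c * (P.derivative.eval t₀ / P.eval t₀) * Q x) =O[l] fun x => ρ x ^ 2 := by
  have hgt : Tendsto g l (𝓝 t₀) := tendsto_sub_nhds_zero_iff.1 (hg.trans_tendsto hρ)
  have hlog := ((P.isBigO_log_eval_sub_sub hP).comp_tendsto hgt).trans (hg.pow 2)
  refine (hlog.add (hgQ.const_mul_left (P.derivative.eval t₀ / P.eval t₀))).congr_left
    fun x => ?_
  simp only [Function.comp_apply]
  ring

theorem isBigO_prod_one_add_sub_sub_sum {α ι R : Type*} [NormedCommRing R] {l : Filter α}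
    {e : ι → α → R} {ρ : α → ℝ} (s : Finset ι) (he : ∀ i ∈ s, e i =O[l] ρ)
    (he₀ : ∀ i ∈ s, Tendsto (e i) l (𝓝 0)) :
    (fun x => ∏ i ∈ s, (1 + e i x) - 1 - ∑ i ∈ s, e i x) =O[l] fun x => ρ x ^ 2 := by
  induction s using Finset.cons_induction with
  | empty => simpa using isBigO_zero _ _
  | cons a s ha ih =>
    have hR := ih (fun i hi => he i (Finset.mem_cons_of_mem hi))
      (fun i hi => he₀ i (Finset.mem_cons_of_mem hi))
    have hea := he a (Finset.mem_cons_self a s)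
    have hsum : (fun x => ∑ i ∈ s, e i x) =O[l] ρ :=
      IsBigO.fun_sum fun i hi => he i (Finset.mem_cons_of_mem hi)
    -- `(1 + eₐ)(1 + Σ + R) - 1 - eₐ - Σ = R + eₐ Σ + eₐ R`
    have hmain := (hR.add (by simpa [sq] using hea.mul hsum)).add
      (by simpa using ((he₀ a (Finset.mem_cons_self a s)).isBigO_one ℝ).mul hR)
    refine hmain.congr_left fun x => ?_
    simp only [Finset.prod_cons, Finset.sum_cons]
    ring

theorem Real.isBigO_cos_sub_one : (fun x => cos x - 1) =O[𝓝 0] fun x => x ^ 2 :=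
  IsBigO.of_bound (1 / 2) <| Eventually.of_forall fun x => by
    have := one_sub_sq_div_two_le_cos (x := x)
    rw [Real.norm_eq_abs, Real.norm_eq_abs, abs_le, abs_of_nonneg (sq_nonneg x)]
    constructor <;> linarith [cos_le_one x]

theorem Real.isBigO_cos_sub_one_add_sq_div_two :
    (fun x => cos x - 1 + x ^ 2 / 2) =O[𝓝 0] fun x => x ^ 4 := by
  refine IsBigO.of_bound (5 / 96) ?_
  filter_upwards [Metric.closedBall_mem_nhds (0 : ℝ) one_pos] with x hx
  have := cos_bound (by simpa using hx)
  rw [Real.norm_eq_abs, Real.norm_eq_abs, abs_pow, mul_comm]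
  rwa [show cos x - 1 + x ^ 2 / 2 = cos x - (1 - x ^ 2 / 2) by ring]

theorem Complex.exp_I_mul_add_inv (x : ℝ) :
    Complex.exp (Complex.I * x) + (Complex.exp (Complex.I * x))⁻¹ =
      ((2 * Real.cos x : ℝ) : ℂ) := by
  rw [← Complex.exp_neg, mul_comm, ← neg_mul, Complex.exp_mul_I, Complex.exp_mul_I,
    Complex.cos_neg, Complex.sin_neg, Complex.ofReal_mul, Complex.ofReal_cos]
  push_cast
  ring

section Torus

variable {ι : Type*} [Fintype ι]

theorem isBigO_comp_apply_norm_pow {f : ℝ → ℝ} {n : ℕ} (hf : f =O[𝓝 0] fun x => x ^ n)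
    (j : ι) : (fun φ : ι → ℝ => f (φ j)) =O[𝓝 0] fun φ => ‖φ‖ ^ n := by
  have hj : Tendsto (fun φ : ι → ℝ => φ j) (𝓝 0) (𝓝 0) := (continuous_apply j).tendsto' _ _ rfl
  refine (hf.comp_tendsto hj).trans (IsBigO.of_bound 1 (Eventually.of_forall fun φ => ?_))
  simpa [norm_pow] using pow_le_pow_left₀ (norm_nonneg _) (norm_le_pi_norm φ j) n

theorem isBigO_sum_two_mul_cos_sub :
    (fun φ : ι → ℝ => ∑ j, 2 * cos (φ j) - 2 * Fintype.card ι) =O[𝓝 0]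
      fun φ => ‖φ‖ ^ 2 := by
  refine (IsBigO.fun_sum (s := Finset.univ) fun j _ =>
    (isBigO_comp_apply_norm_pow isBigO_cos_sub_one j).const_mul_left 2)
    |>.congr_left fun φ => ?_
  simp [mul_sub, Finset.sum_sub_distrib, mul_comm]

theorem isBigO_sum_two_mul_cos_sub_add_sum_sq :
    (fun φ : ι → ℝ => ∑ j, 2 * cos (φ j) - 2 * Fintype.card ι + ∑ j, φ j ^ 2) =O[𝓝 0]
      fun φ => ‖φ‖ ^ 4 := by
  refine (IsBigO.fun_sum (s := Finset.univ) fun j _ =>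
    (isBigO_comp_apply_norm_pow isBigO_cos_sub_one_add_sq_div_two j).const_mul_left 2)
    |>.congr_left fun φ => ?_
  simp only [mul_add, mul_sub, Finset.sum_add_distrib, Finset.sum_sub_distrib]
  simp [mul_comm, mul_div_cancel₀]

theorem isBigO_prod_cos_sub_one_sub_sum :
    (fun φ : ι → ℝ => ∏ j, cos (φ j) - 1 - ∑ j, (cos (φ j) - 1)) =O[𝓝 0]
      fun φ => ‖φ‖ ^ 4 := by
  have h := isBigO_prod_one_add_sub_sub_sum (l := 𝓝 (0 : ι → ℝ)) (ρ := fun φ => ‖φ‖ ^ 2)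
    (e := fun j φ => cos (φ j) - 1) Finset.univ
    (fun j _ => isBigO_comp_apply_norm_pow isBigO_cos_sub_one j)
    (fun j _ => ((continuous_cos.comp (continuous_apply j)).sub continuous_const).tendsto' _ _
      (by simp))
  simpa [← pow_mul] using h

theorem isBigO_prod_two_mul_cos_sub :
    (fun φ : ι → ℝ => ∏ j, 2 * cos (φ j) - 2 ^ Fintype.card ι) =O[𝓝 0]
      fun φ => ‖φ‖ ^ 2 := by
  have hnorm : (fun φ : ι → ℝ => ‖φ‖ ^ 4) =O[𝓝 0] fun φ => ‖φ‖ ^ 2 := by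
    have h0 : Tendsto (fun φ : ι → ℝ => ‖φ‖ ^ 2) (𝓝 0) (𝓝 0) :=
      (continuous_norm.pow 2).tendsto' _ _ (by simp)
    exact ((h0.isBigO_one ℝ).mul (isBigO_refl _ _)).congr (fun φ => by ring) fun φ => one_mul _
  have h := ((isBigO_prod_cos_sub_one_sub_sum (ι := ι)).trans hnorm).add
    (IsBigO.fun_sum (s := Finset.univ) fun j _ => isBigO_comp_apply_norm_pow isBigO_cos_sub_one j)
  refine (h.const_mul_left (2 ^ Fintype.card ι)).congr_left fun φ => ?_
  simp [Finset.prod_mul_distrib]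
  ring

theorem isBigO_prod_two_mul_cos_sub_add_sum_sq :
    (fun φ : ι → ℝ => ∏ j, 2 * cos (φ j) - 2 ^ Fintype.card ι +
      2 ^ Fintype.card ι / 2 * ∑ j, φ j ^ 2) =O[𝓝 0] fun φ => ‖φ‖ ^ 4 := by
  have h := (isBigO_prod_cos_sub_one_sub_sum (ι := ι)).add
    (IsBigO.fun_sum (s := Finset.univ) fun j _ =>
      isBigO_comp_apply_norm_pow isBigO_cos_sub_one_add_sq_div_two j)
  refine (h.const_mul_left (2 ^ Fintype.card ι)).congr_left fun φ => ?_
  simp only [Finset.prod_mul_distrib, Finset.prod_const, Finset.card_univ, Finset.sum_add_distrib,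
    ← Finset.sum_div]
  ring

theorem exists_bound_of_isBigO_norm_pow {F : (ι → ℝ) → ℝ} {p : (ι → ℝ) → Prop} {n : ℕ}
    (hF : F =O[𝓝 0] fun φ => ‖φ‖ ^ n) (hp : ∀ᶠ φ in 𝓝 0, p φ) :
    ∃ C δ : ℝ, 0 < C ∧ 0 < δ ∧
      ∀ φ : ι → ℝ, (∀ j, |φ j| < δ) → p φ ∧ |F φ| ≤ C * (⨆ j, |φ j|) ^ n := by
  obtain ⟨C, hC, hCF⟩ := hF.exists_pos
  obtain ⟨δ, hδ, h⟩ := Metric.eventually_nhds_iff.1 (hp.and hCF.bound)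
  refine ⟨C, δ, hC, hδ, fun φ hφ => ?_⟩
  obtain ⟨hpφ, hFφ⟩ := h (y := φ) (by simpa [pi_norm_lt_iff hδ] using hφ)
  have hnorm : ‖φ‖ ≤ ⨆ j, |φ j| :=
    (pi_norm_le_iff_of_nonneg (Real.iSup_nonneg fun j => abs_nonneg _)).2 fun j => by
      simpa using le_ciSup (f := fun i => |φ i|) (Set.finite_range _).bddAbove j
  refine ⟨hpφ, ?_⟩
  calc |F φ| ≤ C * ‖φ‖ ^ n := by simpa using hFφ
    _ ≤ C * (⨆ j, |φ j|) ^ n := by gcongr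

theorem exists_bound_log_norm_eval_comp (P : ℝ[X]) (S : (ι → ℂ) → ℂ) (g : (ι → ℝ) → ℝ)
    {t₀ c Λ : ℝ} (hS : ∀ φ : ι → ℝ, S (fun j => Complex.exp (Complex.I * φ j)) = P.eval (g φ))
    (hP : P.eval t₀ ≠ 0) (hΛ : Λ = 2 * c * P.derivative.eval t₀ / P.eval t₀)
    (hg : (fun φ => g φ - t₀) =O[𝓝 0] fun φ => ‖φ‖ ^ 2)
    (hgQ : (fun φ => g φ - t₀ + c * ∑ j, φ j ^ 2) =O[𝓝 0] fun φ => ‖φ‖ ^ 4) :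
    ∃ C δ : ℝ, 0 < C ∧ 0 < δ ∧ ∀ φ : ι → ℝ, (∀ j, |φ j| < δ) →
      S (fun j => Complex.exp (Complex.I * φ j)) ≠ 0 ∧
      |log ‖S fun j => Complex.exp (Complex.I * φ j)‖ - log (P.eval t₀) + Λ / 2 * ∑ j, φ j ^ 2|
        ≤ C * (⨆ j, |φ j|) ^ 4 := by
  have hρ : Tendsto (fun φ : ι → ℝ => ‖φ‖ ^ 2) (𝓝 0) (𝓝 0) :=
    (continuous_norm.pow 2).tendsto' _ _ (by simp)
  have hgt : Tendsto g (𝓝 0) (𝓝 t₀) := tendsto_sub_nhds_zero_iff.1 (hg.trans_tendsto hρ)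
  have hlog := isBigO_log_eval_comp_sub_add P hP hρ hg (by simpa [← pow_mul] using hgQ)
  obtain ⟨C, δ, hC, hδ, h⟩ := exists_bound_of_isBigO_norm_pow (by simpa [← pow_mul] using hlog)
    ((P.continuous.tendsto t₀).comp hgt |>.eventually_ne hP)
  refine ⟨C, δ, hC, hδ, fun φ hφ => ?_⟩
  obtain ⟨hne, hbound⟩ := h φ hφ
  rw [hS, Complex.norm_real, Real.norm_eq_abs, log_abs, hΛ]
  refine ⟨by exact_mod_cast hne, ?_⟩
  convert hbound using 4
  ring

end Torus

theorem compGF_log_expansion_general (k : ℕ) (P : Polynomial ℝ)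
    (Sfun : (Fin k → ℂ) → ℂ) (s1 Λ : ℝ)
    (hcase :
      ((∀ z : Fin k → ℂ, (∀ j, z j ≠ 0) →
          Sfun z = Polynomial.aeval (∑ j, (z j + (z j)⁻¹)) P) ∧
        0 < P.eval (2 * (k : ℝ)) ∧
        s1 = P.eval (2 * (k : ℝ)) ∧
        Λ = 2 * P.derivative.eval (2 * (k : ℝ)) / P.eval (2 * (k : ℝ))) ∨
      ((∀ z : Fin k → ℂ, (∀ j, z j ≠ 0) →
          Sfun z = Polynomial.aeval (∏ j, (z j + (z j)⁻¹)) P) ∧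
        0 < P.eval ((2 : ℝ) ^ k) ∧
        s1 = P.eval ((2 : ℝ) ^ k) ∧
        Λ = 2 ^ k * P.derivative.eval ((2 : ℝ) ^ k) / P.eval ((2 : ℝ) ^ k))) :
    ∃ C δ : ℝ, 0 < C ∧ 0 < δ ∧
      ∀ φ : Fin k → ℝ, (∀ j, |φ j| < δ) →
        Sfun (fun j => Complex.exp (Complex.I * φ j)) ≠ 0 ∧
        |Real.log ‖Sfun fun j => Complex.exp (Complex.I * φ j)‖ -
            Real.log s1 + Λ / 2 * ∑ j, φ j ^ 2| ≤
          C * (⨆ j, |φ j|) ^ 4 := by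
  have hexp : ∀ φ : Fin k → ℝ, ∀ j, Complex.exp (Complex.I * φ j) ≠ 0 :=
    fun _ _ => Complex.exp_ne_zero _
  rcases hcase with ⟨hS, hP, rfl, hΛ⟩ | ⟨hS, hP, rfl, hΛ⟩
  · refine exists_bound_log_norm_eval_comp P Sfun (fun φ => ∑ j, 2 * cos (φ j)) (c := 1)
      (fun φ => ?_) hP.ne' (by rw [hΛ]; ring)
      (by simpa using isBigO_sum_two_mul_cos_sub (ι := Fin k))
      (by simpa using isBigO_sum_two_mul_cos_sub_add_sum_sq (ι := Fin k))
    simp only [hS _ (hexp φ), Complex.exp_I_mul_add_inv, ← Complex.ofReal_sum]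
    exact aeval_ofReal P _
  · refine exists_bound_log_norm_eval_comp P Sfun (fun φ => ∏ j, 2 * cos (φ j))
      (c := 2 ^ k / 2) (fun φ => ?_) hP.ne' (by rw [hΛ]; ring)
      (by simpa using isBigO_prod_two_mul_cos_sub (ι := Fin k))
      (by simpa using isBigO_prod_two_mul_cos_sub_add_sum_sq (ι := Fin k))
    simp only [hS _ (hexp φ), Complex.exp_I_mul_add_inv, ← Complex.ofReal_prod]
    exact aeval_ofReal P _

/-- Lemma `lem:step_gen_fun_asymptotics`, second-order form: local
expansion of `log |S(e^{iφ₁},…,e^{iφ_k})|` near the origin, with `Λ = 2 P'(2k)/P(2k)`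
(respectively `Λ = 2^k P'(2^k)/P(2^k)`), and `s1 = S(1,…,1)`. -/
theorem compGF_log_expansion (k : ℕ) (hk : 0 < k) (P : Polynomial ℝ)
    (hP : ∀ i, 0 ≤ P.coeff i) (hPnc : P.natDegree ≠ 0)
    (Sfun : (Fin k → ℂ) → ℂ) (s1 Λ : ℝ)
    (hcase :
      ((∀ z : Fin k → ℂ, (∀ j, z j ≠ 0) →
          Sfun z = Polynomial.aeval (∑ j, (z j + (z j)⁻¹)) P) ∧
        0 < P.eval (2 * (k : ℝ)) ∧
        s1 = P.eval (2 * (k : ℝ)) ∧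
        Λ = 2 * P.derivative.eval (2 * (k : ℝ)) / P.eval (2 * (k : ℝ))) ∨
      ((∀ z : Fin k → ℂ, (∀ j, z j ≠ 0) →
          Sfun z = Polynomial.aeval (∏ j, (z j + (z j)⁻¹)) P) ∧
        0 < P.eval ((2 : ℝ) ^ k) ∧
        s1 = P.eval ((2 : ℝ) ^ k) ∧
        Λ = 2 ^ k * P.derivative.eval ((2 : ℝ) ^ k) / P.eval ((2 : ℝ) ^ k))) :
    ∃ C δ : ℝ, 0 < C ∧ 0 < δ ∧
      ∀ φ : Fin k → ℝ, (∀ j, |φ j| < δ) →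
        Sfun (fun j => Complex.exp (Complex.I * φ j)) ≠ 0 ∧
        |Real.log ‖Sfun fun j => Complex.exp (Complex.I * φ j)‖ -
            Real.log s1 + Λ / 2 * ∑ j, φ j ^ 2| ≤
          C * (⨆ j, |φ j|) ^ 4 :=
  compGF_log_expansion_general k P Sfun s1 Λ hcase
end

section
/- (Determinant factorisation on an annulus.) Let 0 ≤ r* < R* and let B_1,…,B_k : ℂ → ℂ be analytic and one-valued on the annulus {x ∈ ℂ : r* ≤ |x| < R*}. Let x_1,…,x_k ∈ ℂ and r, R satisfy r* < r < min_j |x_j| ≤ max_j |x_j| < R < R*. Then det_{1≤j,m≤k}( B_m(x_j) ) = (∏_{1≤j<m≤k}(x_m − x_j)) · det_{1≤j,m≤k}( (2πi)^{−1} ∮_{|ξ|=R} B_m(ξ)/∏_{ℓ=1}^{j}(ξ − x_ℓ) dξ − (2πi)^{−1} ∮_{|ξ|=r} B_m(ξ)/∏_{ℓ=1}^{j}(ξ − x_ℓ) dξ ), where the contours are positively oriented circles about the origin. -/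
/-!
Partial fractions write `1 / ∏_{ℓ ≤ j} (ξ - x_ℓ)` as `∑_{i ≤ j} w_{j,i} / (ξ - x_i)` with the
barycentric weights `w_{j,i} = ∏_{ℓ ≤ j, ℓ ≠ i} (x_i - x_ℓ)⁻¹`, and the Cauchy integral formula on
the annulus turns the difference of the two circle integrals of `B_m(ξ) / (ξ - x_i)` into
`2πi B_m(x_i)`. Hence the matrix of contour integrals is `L · (B_m(x_j))` with `L` lower triangular,
and the diagonal entries `∏_{ℓ < j} (x_j - x_ℓ)⁻¹` of `L` multiply to the inverse of the Vandermonde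
determinant. When the `x_j` are not distinct, both sides vanish.
-/

open Finset Metric Set Complex Lagrange Real

theorem Lagrange.inv_prod_sub_eq_sum_nodalWeight_mul_inv_sub {F ι : Type*} [Field F]
    [DecidableEq ι] {s : Finset ι} {v : ι → F} {x : F} (hvs : Set.InjOn v s) (hs : s.Nonempty)
    (hx : ∀ i ∈ s, x ≠ v i) :
    (∏ i ∈ s, (x - v i))⁻¹ = ∑ i ∈ s, nodalWeight s v i * (x - v i)⁻¹ := by
  refine inv_eq_of_mul_eq_one_right ?_
  simpa [interpolate_one hvs hs, eval_nodal] using (eval_interpolate_not_at_node 1 hx).symm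

theorem Metric.sphere_subset_closedBall_sdiff_ball {α : Type*} [PseudoMetricSpace α] {x : α}
    {r ρ R : ℝ} (hrρ : r ≤ ρ) (hρR : ρ ≤ R) : sphere x ρ ⊆ closedBall x R \ ball x r :=
  fun _ hz => ⟨(mem_sphere.1 hz).trans_le hρR, not_lt.2 (hrρ.trans_eq (mem_sphere.1 hz).symm)⟩

section annulus

variable {E : Type*} [NormedAddCommGroup E] [NormedSpace ℂ E] [CompleteSpace E]
  {c w : ℂ} {r R : ℝ} {f : ℂ → E}

theorem circleIntegral.integral_sub_inv_of_notMem_closedBall (hr : 0 ≤ r)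
    (hw : w ∉ closedBall c r) : (∮ z in C(c, r), (z - w)⁻¹) = 0 := by
  have hne : ∀ z ∈ closedBall c r, z - w ≠ 0 := fun z hz => sub_ne_zero.2 fun h => hw (h ▸ hz)
  exact circleIntegral_eq_zero_of_differentiable_on_off_countable hr countable_empty
    ((continuousOn_id.sub continuousOn_const).inv₀ hne)
    fun z hz => (differentiableAt_id.sub_const w).inv (hne z (ball_subset_closedBall hz.1))

theorem circleIntegral_sub_inv_smul_sub_circleIntegral_of_annulus (hr : 0 < r)
    (hw : w ∈ ball c R \ closedBall c r) (hc : ContinuousOn f (closedBall c R \ ball c r))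
    (hd : DifferentiableOn ℂ f (ball c R \ closedBall c r)) :
    (∮ z in C(c, R), (z - w)⁻¹ • f z) - (∮ z in C(c, r), (z - w)⁻¹ • f z) =
      (2 * π * I : ℂ) • f w := by
  -- `dslope f w` is holomorphic on the annulus off `w` and continuous at `w`, so Cauchy-Goursat
  -- applies to it; what remains is `f w` times the winding numbers of the two circles around `w`.
  have hopen : IsOpen (ball c R \ closedBall c r) := isOpen_ball.sdiff isClosed_closedBall
  have hrR : r ≤ R := ((not_le.1 hw.2).trans hw.1).le
  have hwf : DifferentiableAt ℂ f w := hd.differentiableAt (hopen.mem_nhds hw)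
  have hcF : ContinuousOn (dslope f w) (closedBall c R \ ball c r) :=
    (continuousOn_dslope (Filter.mem_of_superset (hopen.mem_nhds hw)
      (sdiff_subset_sdiff ball_subset_closedBall ball_subset_closedBall))).2 ⟨hc, hwf⟩
  have hdF : ∀ z ∈ (ball c R \ closedBall c r) \ {w}, DifferentiableAt ℂ (dslope f w) z :=
    fun z hz => (differentiableAt_dslope_of_ne hz.2).2 (hd.differentiableAt (hopen.mem_nhds hz.1))
  have HI := circleIntegral_eq_of_differentiable_on_annulus_off_countable hr hrR
    (countable_singleton w) hcF hdF
  have hsplit : ∀ ρ, r ≤ ρ → ρ ≤ R → w ∉ sphere c ρ →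
      (∮ z in C(c, ρ), (z - w)⁻¹ • f z) =
        (∮ z in C(c, ρ), dslope f w z) + (∮ z in C(c, ρ), (z - w)⁻¹) • f w := by
    intro ρ hrρ hρR hwρ
    have hne : ∀ z ∈ sphere c ρ, z ≠ w := fun z hz h => hwρ (h ▸ hz)
    have hsph := sphere_subset_closedBall_sdiff_ball (x := c) hrρ hρR
    have hinv : ContinuousOn (fun z => (z - w)⁻¹) (sphere c ρ) :=
      (continuousOn_id.sub continuousOn_const).inv₀ fun z hz => sub_ne_zero.2 (hne z hz)
    have hint : CircleIntegrable (fun z => (z - w)⁻¹ • f w) c ρ :=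
      (hinv.smul continuousOn_const).circleIntegrable (hr.le.trans hrρ)
    rw [← circleIntegral.integral_smul_const, ← circleIntegral.integral_add
      ((hcF.mono hsph).circleIntegrable (hr.le.trans hrρ)) hint]
    refine circleIntegral.integral_congr (hr.le.trans hrρ) fun z hz => ?_
    simp only [dslope_of_ne f (hne z hz), slope, vsub_eq_sub, smul_sub]
    abel
  rw [hsplit R hrR le_rfl (fun h => (mem_sphere.1 h).not_lt hw.1),
    hsplit r le_rfl hrR (fun h => hw.2 (sphere_subset_closedBall h)), HI,
    circleIntegral.integral_sub_inv_of_mem_ball hw.1,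
    circleIntegral.integral_sub_inv_of_notMem_closedBall hr.le hw.2]
  simp

end annulus

section partialFractions

variable {ι : Type*} [DecidableEq ι] {s : Finset ι} {v : ι → ℂ} {f : ℂ → ℂ} {c : ℂ}

theorem circleIntegral_div_prod_sub {ρ : ℝ} (hρ : 0 ≤ ρ) (hvs : Set.InjOn v s) (hs : s.Nonempty)
    (hv : ∀ i ∈ s, v i ∉ sphere c ρ) (hf : ContinuousOn f (sphere c ρ)) :
    (∮ z in C(c, ρ), f z / ∏ i ∈ s, (z - v i)) =
      ∑ i ∈ s, nodalWeight s v i * ∮ z in C(c, ρ), (z - v i)⁻¹ * f z := by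
  have hne : ∀ z ∈ sphere c ρ, ∀ i ∈ s, z ≠ v i := fun z hz i hi h => hv i hi (h ▸ hz)
  have hint : ∀ i ∈ s,
      CircleIntegrable (fun z => nodalWeight s v i * ((z - v i)⁻¹ * f z)) c ρ :=
    fun i hi => (continuousOn_const.mul (((continuousOn_id.sub continuousOn_const).inv₀
      fun z hz => sub_ne_zero.2 (hne z hz i hi)).mul hf)).circleIntegrable hρ
  simp_rw [← circleIntegral.integral_const_mul, ← circleIntegral.integral_fun_sum hint]
  refine circleIntegral.integral_congr hρ fun z hz => ?_
  simp only [div_eq_inv_mul, inv_prod_sub_eq_sum_nodalWeight_mul_inv_sub hvs hs (hne z hz),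
    sum_mul, mul_assoc]

theorem circleIntegral_div_prod_sub_sub_circleIntegral_of_annulus {r R : ℝ} (hr : 0 < r)
    (hvs : Set.InjOn v s) (hs : s.Nonempty) (hv : ∀ i ∈ s, v i ∈ ball c R \ closedBall c r)
    (hc : ContinuousOn f (closedBall c R \ ball c r))
    (hd : DifferentiableOn ℂ f (ball c R \ closedBall c r)) :
    (∮ z in C(c, R), f z / ∏ i ∈ s, (z - v i)) - (∮ z in C(c, r), f z / ∏ i ∈ s, (z - v i)) =
      2 * π * I * ∑ i ∈ s, nodalWeight s v i * f (v i) := by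
  have hrR : r ≤ R := by
    obtain ⟨i, hi⟩ := hs
    exact ((not_le.1 (hv i hi).2).trans (hv i hi).1).le
  rw [circleIntegral_div_prod_sub (hr.le.trans hrR) hvs hs _ _,
    circleIntegral_div_prod_sub hr.le hvs hs _ _, ← sum_sub_distrib, mul_sum]
  · refine sum_congr rfl fun i hi => ?_
    have hcauchy := circleIntegral_sub_inv_smul_sub_circleIntegral_of_annulus hr (hv i hi) hc hd
    simp only [smul_eq_mul] at hcauchy
    rw [← mul_sub, hcauchy]
    ring
  · exact fun i hi h => (hv i hi).2 (sphere_subset_closedBall h)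
  · exact hc.mono (sphere_subset_closedBall_sdiff_ball le_rfl hrR)
  · exact fun i hi h => sphere_disjoint_ball.notMem_of_mem_right (hv i hi).1 h
  · exact hc.mono (sphere_subset_closedBall_sdiff_ball hrR le_rfl)

end partialFractions

section Vandermonde

open Matrix

variable {n : ℕ}

theorem det_vandermonde_eq_prod_Iio {R : Type*} [CommRing R] (v : Fin n → R) :
    (vandermonde v).det = ∏ j, ∏ i ∈ Iio j, (v j - v i) := by
  rw [det_vandermonde]
  exact prod_comm' fun i j => by simp

theorem prod_filter_lt_sub_eq_det_vandermonde {R : Type*} [CommRing R] (v : Fin n → R) :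
    ∏ p ∈ univ.filter (fun p : Fin n × Fin n => p.1 < p.2), (v p.2 - v p.1) =
      (vandermonde v).det := by
  rw [det_vandermonde, prod_filter, Fintype.prod_prod_type]
  refine prod_congr rfl fun i _ => ?_
  rw [← prod_filter, filter_lt_eq_Ioi]

variable {F : Type*} [Field F]

def nodalWeightMatrix (v : Fin n → F) : Matrix (Fin n) (Fin n) F :=
  of fun j i => if i ≤ j then nodalWeight (Iic j) v i else 0

theorem nodalWeightMatrix_mul_apply {α : Type*} (v : Fin n → F) (A : Matrix (Fin n) α F)
    (j : Fin n) (m : α) :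
    (nodalWeightMatrix v * A) j m = ∑ i ∈ Iic j, nodalWeight (Iic j) v i * A i m := by
  simp only [nodalWeightMatrix, mul_apply, of_apply, ite_mul, zero_mul, ← sum_filter,
    filter_ge_eq_Iic]

theorem det_nodalWeightMatrix (v : Fin n → F) :
    (nodalWeightMatrix v).det = (vandermonde v).det⁻¹ := by
  have htri : (nodalWeightMatrix v).IsLowerTriangular := fun j i hij => by
    simp [nodalWeightMatrix, not_le.2 (OrderDual.toDual_lt_toDual.1 hij)]
  rw [det_of_isLowerTriangular _ htri, det_vandermonde_eq_prod_Iio, ← prod_inv_distrib]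
  refine prod_congr rfl fun j _ => ?_
  simp [nodalWeightMatrix, nodalWeight, Iic_erase, prod_inv_distrib]

theorem det_eq_det_vandermonde_mul_det_nodalWeightMatrix_mul {v : Fin n → F}
    (hv : Function.Injective v) (A : Matrix (Fin n) (Fin n) F) :
    A.det = (vandermonde v).det * (nodalWeightMatrix v * A).det := by
  rw [det_mul, det_nodalWeightMatrix, mul_inv_cancel_left₀ (det_vandermonde_ne_zero_iff.2 hv)]

end Vandermonde

theorem det_factorisation_annulus_general {k : ℕ} (rs Rs : ℝ)
    (hrs : 0 ≤ rs)
    (B : Fin k → ℂ → ℂ)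
    (hB : ∀ m, AnalyticOnNhd ℂ (B m) {x : ℂ | rs ≤ ‖x‖ ∧ ‖x‖ < Rs})
    (x : Fin k → ℂ) (r R : ℝ)
    (hr : rs < r) (hrx : ∀ j, r < ‖x j‖)
    (hxR : ∀ j, ‖x j‖ < R) (hR : R < Rs) :
    Matrix.det (Matrix.of fun j m : Fin k => B m (x j)) =
      (∏ p ∈ Finset.univ.filter (fun p : Fin k × Fin k => p.1 < p.2), (x p.2 - x p.1)) *
        Matrix.det (Matrix.of fun j m : Fin k =>
          (2 * (Real.pi : ℂ) * Complex.I)⁻¹ *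
              (∮ ξ in C(0, R), B m ξ / ∏ ℓ ∈ Finset.univ.filter (· ≤ j), (ξ - x ℓ)) -
            (2 * (Real.pi : ℂ) * Complex.I)⁻¹ *
              (∮ ξ in C(0, r), B m ξ / ∏ ℓ ∈ Finset.univ.filter (· ≤ j), (ξ - x ℓ))) := by
  have hann : closedBall (0 : ℂ) R \ ball 0 r ⊆ {z : ℂ | rs ≤ ‖z‖ ∧ ‖z‖ < Rs} := fun z hz =>
    ⟨hr.le.trans (not_lt.1 (hz.2 ∘ mem_ball_zero_iff.2)),
      (mem_closedBall_zero_iff.1 hz.1).trans_lt hR⟩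
  have hx_mem : ∀ j, x j ∈ ball 0 R \ closedBall 0 r := fun j =>
    ⟨mem_ball_zero_iff.2 (hxR j), fun h => (mem_closedBall_zero_iff.1 h).not_gt (hrx j)⟩
  rw [prod_filter_lt_sub_eq_det_vandermonde]
  by_cases hx : Function.Injective x
  · rw [det_eq_det_vandermonde_mul_det_nodalWeightMatrix_mul hx]
    congr 2
    ext j m
    simp only [Matrix.of_apply, nodalWeightMatrix_mul_apply, filter_ge_eq_Iic]
    rw [← mul_sub, circleIntegral_div_prod_sub_sub_circleIntegral_of_annulus (hrs.trans_lt hr)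
        hx.injOn nonempty_Iic (fun i _ => hx_mem i) ((hB m).continuousOn.mono hann)
        ((hB m).differentiableOn.mono ((Set.sdiff_subset_sdiff ball_subset_closedBall
          ball_subset_closedBall).trans hann)),
      ← mul_assoc, inv_mul_cancel₀ two_pi_I_ne_zero, one_mul]
  · obtain ⟨a, b, hab, hne⟩ := Function.not_injective_iff.1 hx
    rw [Matrix.det_zero_of_row_eq hne (funext fun m => congrArg (B m) hab),
      Matrix.det_vandermonde_eq_zero_iff.2 ⟨a, b, hab, hne⟩, zero_mul]

/-- Lemma `lem:det_factorisation`: factorisation of a determinant whose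
columns are analytic functions on an annulus, via Laurent-coefficient contour integrals. -/
theorem det_factorisation_annulus {k : ℕ} (hk : 0 < k) (rs Rs : ℝ)
    (hrs : 0 ≤ rs) (hrsRs : rs < Rs)
    (B : Fin k → ℂ → ℂ)
    (hB : ∀ m, AnalyticOnNhd ℂ (B m) {x : ℂ | rs ≤ ‖x‖ ∧ ‖x‖ < Rs})
    (x : Fin k → ℂ) (r R : ℝ)
    (hr : rs < r) (hrx : ∀ j, r < ‖x j‖)
    (hxR : ∀ j, ‖x j‖ < R) (hR : R < Rs) :
    Matrix.det (Matrix.of fun j m : Fin k => B m (x j)) =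
      (∏ p ∈ Finset.univ.filter (fun p : Fin k × Fin k => p.1 < p.2), (x p.2 - x p.1)) *
        Matrix.det (Matrix.of fun j m : Fin k =>
          (2 * (Real.pi : ℂ) * Complex.I)⁻¹ *
              (∮ ξ in C(0, R), B m ξ / ∏ ℓ ∈ Finset.univ.filter (· ≤ j), (ξ - x ℓ)) -
            (2 * (Real.pi : ℂ) * Complex.I)⁻¹ *
              (∮ ξ in C(0, r), B m ξ / ∏ ℓ ∈ Finset.univ.filter (· ≤ j), (ξ - x ℓ))) :=
  det_factorisation_annulus_general rs Rs hrs B hB x r R hr hrx hxR hR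
end

section
/- (Determinant factorisation, odd symmetry.) Let R_1*, R_2* > 0 and let A : ℂ × ℂ → ℂ be analytic on {(x,y) : |x| < R_1*, |y| < R_2*} with A(−x,y) = −A(x,y) for all such (x,y). Let x_1,…,x_k, y_1,…,y_k ∈ ℂ and R_1, R_2 satisfy max_j |x_j| < R_1 < R_1* and max_j |y_j| < R_2 < R_2*. Then det_{1≤j,m≤k}( A(x_j, y_m) ) = (∏_{j=1}^k x_j) · (∏_{1≤j<m≤k}(x_m² − x_j²)(y_m − y_j)) · det_{1≤j,m≤k}( (2πi)^{−2} ∮_{|ξ|=R_1} ∮_{|η|=R_2} A(ξ,η) / ( (∏_{ℓ=1}^{j}(ξ² − x_ℓ²)) · (∏_{ℓ=1}^{m}(η − y_ℓ)) ) dη dξ ), where the contours are positively oriented circles about the origin. -/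
/-!
Newton interpolation of `1 / (z - X)` at nodes `v₀, …, v_{k-1}` gives, for `z` off the nodes,
`∑ⱼ ∏_{ℓ<j} (vᵢ - v_ℓ) / ∏_{ℓ≤j} (z - v_ℓ) = (z - vᵢ)⁻¹`. Applied in `ξ²` with nodes `x_ℓ²` and
in `η` with nodes `y_ℓ`, it expands `(ξ² - x_j²)⁻¹ (η - y_m)⁻¹` in the kernels
`(∏_{ℓ≤j'} (ξ² - x_ℓ²) ∏_{ℓ≤m'} (η - y_ℓ))⁻¹`, the coefficients being the entries of the
triangular Newton matrices `N` of `x²` and `U` of `y`. Integrating against `A`, with Cauchy's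
formula in `η` and its odd form `∮ w f(ξ) / (ξ² - w²) dξ = 2πi f(w)` in `ξ`, gives
`A(x_j, y_m) = (diag x · N · B · Uᵀ)_{jm}` for the matrix `B` of double integrals, and the Newton
matrices have Vandermonde determinants.
-/

open Finset Matrix Metric Complex Real Set

theorem mul_sum_prod_Iio_div_prod_Iic {K : Type*} [Field K] {n : ℕ} (v : Fin n → K) (u z : K)
    (hz : ∀ ℓ, z ≠ v ℓ) :
    (z - u) * ∑ j, (∏ ℓ ∈ Iio j, (u - v ℓ)) / ∏ ℓ ∈ Iic j, (z - v ℓ) =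
      1 - (∏ ℓ, (u - v ℓ)) / ∏ ℓ, (z - v ℓ) := by
  induction n with
  | zero => simp
  | succ n ih =>
    have hlast : z - v (Fin.last n) ≠ 0 := sub_ne_zero.mpr (hz _)
    have hinit : ∏ ℓ : Fin n, (z - v ℓ.castSucc) ≠ 0 :=
      prod_ne_zero_iff.mpr fun ℓ _ => sub_ne_zero.mpr (hz _)
    rw [Fin.sum_univ_castSucc, mul_add]
    simp only [Fin.prod_Iio_castSucc, Fin.prod_Iic_castSucc]
    rw [ih (fun ℓ => v ℓ.castSucc) fun ℓ => hz _, Fin.Iio_last_eq_map, ← Fin.top_eq_last,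
      Finset.Iic_top, prod_map, Fin.prod_univ_castSucc, Fin.prod_univ_castSucc]
    simp only [Fin.coe_castSuccEmb]
    field_simp
    ring

def newtonMatrix {R : Type*} [CommRing R] {n : ℕ} (v : Fin n → R) : Matrix (Fin n) (Fin n) R :=
  of fun i j => ∏ ℓ ∈ Iio j, (v i - v ℓ)

theorem sum_newtonMatrix_div_prod_Iic {K : Type*} [Field K] {n : ℕ} (v : Fin n → K) (i : Fin n)
    {z : K} (hz : ∀ ℓ, z ≠ v ℓ) :
    ∑ j, newtonMatrix v i j / ∏ ℓ ∈ Iic j, (z - v ℓ) = (z - v i)⁻¹ := by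
  have h := mul_sum_prod_Iio_div_prod_Iic v (v i) z hz
  rw [prod_eq_zero (mem_univ i) (sub_self _), zero_div, sub_zero] at h
  exact eq_inv_of_mul_eq_one_right h

theorem det_newtonMatrix {R : Type*} [CommRing R] {n : ℕ} (v : Fin n → R) :
    (newtonMatrix v).det = (vandermonde v).det := by
  cases subsingleton_or_nontrivial R
  · exact Subsingleton.elim _ _
  open Polynomial in
  rw [det_eval_matrixOfPolynomials_eq_det_vandermonde v (fun j => ∏ ℓ ∈ Iio j, (X - C (v ℓ)))]
  · simp [newtonMatrix, eval_prod]
  · intro j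
    rw [natDegree_prod_of_monic _ _ fun ℓ _ => monic_X_sub_C (v ℓ)]
    simp
  · exact fun j => monic_prod_of_monic _ _ fun ℓ _ => monic_X_sub_C (v ℓ)

theorem prod_filter_lt_eq_prod_prod_Ioi {ι M : Type*} [CommMonoid M] [Fintype ι] [LinearOrder ι]
    [LocallyFiniteOrderTop ι] (f : ι → ι → M) :
    ∏ p ∈ univ.filter (fun p : ι × ι => p.1 < p.2), f p.1 p.2 = ∏ i, ∏ j ∈ Ioi i, f i j := by
  rw [prod_filter, Fintype.prod_prod_type]
  refine prod_congr rfl fun i _ => ?_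
  rw [← prod_filter]
  congr 1
  ext j
  simp

theorem sum_sum_newtonMatrix_mul_div {K : Type*} [Field K] {n : ℕ} (v w : Fin n → K)
    (i l : Fin n) {z t : K} (hz : ∀ ℓ, z ≠ v ℓ) (ht : ∀ ℓ, t ≠ w ℓ) :
    ∑ j, ∑ m, newtonMatrix v i j * newtonMatrix w l m /
        ((∏ ℓ ∈ Iic j, (z - v ℓ)) * ∏ ℓ ∈ Iic m, (t - w ℓ)) =
      ((z - v i) * (t - w l))⁻¹ := by
  simp only [mul_div_mul_comm, ← mul_sum, ← sum_mul, sum_newtonMatrix_div_prod_Iic v i hz,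
    sum_newtonMatrix_div_prod_Iic w l ht, mul_inv]

section

variable {E : Type*} [NormedAddCommGroup E] [NormedSpace ℂ E]

theorem circleIntegral.integral_finsetSum {ι : Type*} {s : Finset ι} {f : ι → ℂ → E} {c : ℂ}
    {R : ℝ} (hf : ∀ i ∈ s, CircleIntegrable (f i) c R) :
    (∮ z in C(c, R), ∑ i ∈ s, f i z) = ∑ i ∈ s, ∮ z in C(c, R), f i z := by
  simp only [circleIntegral, smul_sum]
  exact intervalIntegral.integral_finsetSum fun i hi => (hf i hi).out

theorem circleIntegrable_circleIntegral {F : ℂ → ℂ → E} {c₁ c₂ : ℂ} {R₁ R₂ : ℝ}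
    (hR₁ : 0 ≤ R₁) (hR₂ : 0 ≤ R₂)
    (hF : ContinuousOn (Function.uncurry F) (sphere c₁ R₁ ×ˢ sphere c₂ R₂)) :
    CircleIntegrable (fun ξ => ∮ η in C(c₂, R₂), F ξ η) c₁ R₁ := by
  have hFcirc : Continuous fun p : ℝ × ℝ => F (circleMap c₁ R₁ p.1) (circleMap c₂ R₂ p.2) :=
    hF.comp_continuous (f := fun p : ℝ × ℝ => (circleMap c₁ R₁ p.1, circleMap c₂ R₂ p.2))
      (by fun_prop) fun p =>
      ⟨circleMap_mem_sphere _ hR₁ _, circleMap_mem_sphere _ hR₂ _⟩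
  refine Continuous.intervalIntegrable ?_ _ _
  simp only [circleIntegral, deriv_circleMap]
  refine intervalIntegral.continuous_parametric_intervalIntegral_of_continuous' ?_ _ _
  exact (by fun_prop : Continuous fun p : ℝ × ℝ => circleMap 0 R₂ p.2 * I).smul hFcirc

theorem circleIntegral_circleIntegral_finsetSum {ι : Type*} {s : Finset ι} {F : ι → ℂ → ℂ → E}
    {c₁ c₂ : ℂ} {R₁ R₂ : ℝ} (hR₁ : 0 ≤ R₁) (hR₂ : 0 ≤ R₂)
    (hF : ∀ i ∈ s, ContinuousOn (Function.uncurry (F i)) (sphere c₁ R₁ ×ˢ sphere c₂ R₂)) :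
    (∮ ξ in C(c₁, R₁), ∮ η in C(c₂, R₂), ∑ i ∈ s, F i ξ η) =
      ∑ i ∈ s, ∮ ξ in C(c₁, R₁), ∮ η in C(c₂, R₂), F i ξ η := by
  rw [← circleIntegral.integral_finsetSum fun i hi =>
    circleIntegrable_circleIntegral hR₁ hR₂ (hF i hi)]
  refine circleIntegral.integral_congr hR₁ fun ξ hξ => ?_
  refine circleIntegral.integral_finsetSum fun i hi => ?_
  refine ContinuousOn.circleIntegrable hR₂ ?_
  exact (hF i hi).comp (f := fun η => (ξ, η)) (by fun_prop) fun η hη => ⟨hξ, hη⟩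

theorem circleIntegral_mul_inv_sq_sub_sq_smul [CompleteSpace E] {R : ℝ} {w : ℂ} {f : ℂ → E}
    (hf : DifferentiableOn ℂ f (closedBall 0 R)) (hw : w ∈ ball 0 R) (hodd : f (-w) = -f w) :
    (∮ ξ in C(0, R), (w * (ξ ^ 2 - w ^ 2)⁻¹) • f ξ) = (2 * π * I : ℂ) • f w := by
  have hR : 0 ≤ R := (pos_of_mem_ball hw).le
  have hw' : -w ∈ ball (0 : ℂ) R := by simpa using hw
  have hne : ∀ ξ ∈ sphere (0 : ℂ) R, ∀ w' ∈ ball (0 : ℂ) R, ξ - w' ≠ 0 := fun ξ hξ w' hw' =>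
    sub_ne_zero.mpr (sphere_disjoint_ball.ne_of_mem hξ hw')
  have hint : ∀ w' ∈ ball (0 : ℂ) R, CircleIntegrable (fun ξ => (ξ - w')⁻¹ • f ξ) 0 R :=
    fun w' hw' => ContinuousOn.circleIntegrable hR <|
      ((continuousOn_id.sub continuousOn_const).inv₀ fun ξ hξ => hne ξ hξ w' hw').smul
        (hf.continuousOn.mono sphere_subset_closedBall)
  have hsplit : EqOn (fun ξ => (w * (ξ ^ 2 - w ^ 2)⁻¹) • f ξ)
      (fun ξ => (2⁻¹ : ℂ) • ((ξ - w)⁻¹ • f ξ - (ξ - -w)⁻¹ • f ξ)) (sphere 0 R) := by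
    intro ξ hξ
    have h₁ := hne ξ hξ w hw
    have h₂ := hne ξ hξ (-w) hw'
    simp only [smul_smul, ← sub_smul]
    congr 1
    rw [sub_neg_eq_add] at h₂ ⊢
    rw [show ξ ^ 2 - w ^ 2 = (ξ - w) * (ξ + w) by ring]
    field_simp
    ring
  rw [circleIntegral.integral_congr hR hsplit, circleIntegral.integral_smul,
    circleIntegral.integral_sub (hint w hw) (hint (-w) hw'),
    hf.circleIntegral_sub_inv_smul hw, hf.circleIntegral_sub_inv_smul hw', hodd, smul_neg,
    sub_neg_eq_add, ← two_smul ℂ, smul_smul]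
  norm_num

end

theorem circleIntegral_circleIntegral_div_sq_sub_sq_mul_sub {A : ℂ → ℂ → ℂ} {R₁ R₂ : ℝ} {w z : ℂ}
    (hA₁ : DifferentiableOn ℂ (fun ξ => A ξ z) (closedBall 0 R₁))
    (hA₂ : ∀ ξ ∈ sphere (0 : ℂ) R₁, DifferentiableOn ℂ (A ξ) (closedBall 0 R₂))
    (hw : w ∈ ball 0 R₁) (hz : z ∈ ball 0 R₂) (hodd : A (-w) z = -A w z) :
    w * (∮ ξ in C(0, R₁), ∮ η in C(0, R₂), A ξ η / ((ξ ^ 2 - w ^ 2) * (η - z))) =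
      (2 * π * I) ^ 2 * A w z := by
  have hinner : EqOn (fun ξ => ∮ η in C(0, R₂), A ξ η / ((ξ ^ 2 - w ^ 2) * (η - z)))
      (fun ξ => (2 * π * I) * ((ξ ^ 2 - w ^ 2)⁻¹ * A ξ z)) (sphere 0 R₁) := by
    intro ξ hξ
    calc (∮ η in C(0, R₂), A ξ η / ((ξ ^ 2 - w ^ 2) * (η - z)))
        = (ξ ^ 2 - w ^ 2)⁻¹ * ∮ η in C(0, R₂), (η - z)⁻¹ • A ξ η := by
          rw [← circleIntegral.integral_const_mul]
          congr 1 with η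
          rw [smul_eq_mul, div_eq_mul_inv, mul_inv]
          ring
      _ = (2 * π * I) * ((ξ ^ 2 - w ^ 2)⁻¹ * A ξ z) := by
          rw [(hA₂ ξ hξ).circleIntegral_sub_inv_smul hz, smul_eq_mul]
          ring
  calc _ = w * ∮ ξ in C(0, R₁), (2 * π * I) * ((ξ ^ 2 - w ^ 2)⁻¹ * A ξ z) := by
        rw [circleIntegral.integral_congr (pos_of_mem_ball hw).le hinner]
    _ = (2 * π * I) * ∮ ξ in C(0, R₁), (w * (ξ ^ 2 - w ^ 2)⁻¹) • A ξ z := by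
        simp only [smul_eq_mul, mul_assoc, circleIntegral.integral_const_mul]
        ring
    _ = (2 * π * I) ^ 2 * A w z := by
        rw [circleIntegral_mul_inv_sq_sub_sq_smul hA₁ hw hodd, smul_eq_mul]
        ring

theorem sq_ne_sq_of_mem_sphere_of_norm_lt {R : ℝ} {ξ a : ℂ} (hξ : ξ ∈ sphere 0 R) (ha : ‖a‖ < R) :
    ξ ^ 2 ≠ a ^ 2 := by
  intro h
  have := congrArg norm h
  rw [norm_pow, norm_pow, mem_sphere_zero_iff_norm.mp hξ] at this
  exact (pow_lt_pow_left₀ ha (norm_nonneg _) two_ne_zero).ne' this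

theorem mul_sum_newtonMatrix_mul_sum_circleIntegral {k : ℕ} {A : ℂ → ℂ → ℂ} {R₁ R₂ : ℝ}
    {x y : Fin k → ℂ} {j m : Fin k}
    (hcont : ContinuousOn (Function.uncurry A) (sphere 0 R₁ ×ˢ sphere 0 R₂))
    (hA₁ : DifferentiableOn ℂ (fun ξ => A ξ (y m)) (closedBall 0 R₁))
    (hA₂ : ∀ ξ ∈ sphere (0 : ℂ) R₁, DifferentiableOn ℂ (A ξ) (closedBall 0 R₂))
    (hx : ∀ ℓ, ‖x ℓ‖ < R₁) (hy : ∀ ℓ, ‖y ℓ‖ < R₂) (hodd : A (-x j) (y m) = -A (x j) (y m)) :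
    x j * ∑ j', newtonMatrix (fun ℓ => x ℓ ^ 2) j j' * ∑ m',
        ((2 * π * I) ^ 2)⁻¹ * (∮ ξ in C(0, R₁), ∮ η in C(0, R₂),
          A ξ η / ((∏ ℓ ∈ Iic j', (ξ ^ 2 - x ℓ ^ 2)) * ∏ ℓ ∈ Iic m', (η - y ℓ))) *
        newtonMatrix y m m' = A (x j) (y m) := by
  have hR₁ : 0 ≤ R₁ := (norm_nonneg _).trans (hx j).le
  have hR₂ : 0 ≤ R₂ := (norm_nonneg _).trans (hy m).le
  have hP : ∀ ξ ∈ sphere (0 : ℂ) R₁, ∀ ℓ, ξ ^ 2 ≠ x ℓ ^ 2 :=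
    fun ξ hξ ℓ => sq_ne_sq_of_mem_sphere_of_norm_lt hξ (hx ℓ)
  have hQ : ∀ η ∈ sphere (0 : ℂ) R₂, ∀ ℓ, η ≠ y ℓ :=
    fun η hη ℓ => sphere_disjoint_ball.ne_of_mem hη (mem_ball_zero_iff.mpr (hy ℓ))
  set G : Fin k → Fin k → ℂ → ℂ → ℂ := fun j' m' ξ η =>
    newtonMatrix (fun ℓ => x ℓ ^ 2) j j' * newtonMatrix y m m' *
      (A ξ η / ((∏ ℓ ∈ Iic j', (ξ ^ 2 - x ℓ ^ 2)) * ∏ ℓ ∈ Iic m', (η - y ℓ)))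
  have hG : ∀ j' m', ContinuousOn (Function.uncurry (G j' m')) (sphere 0 R₁ ×ˢ sphere 0 R₂) := by
    intro j' m'
    refine continuousOn_const.mul (hcont.div (by fun_prop) ?_)
    rintro ⟨ξ, η⟩ ⟨hξ, hη⟩
    exact mul_ne_zero (prod_ne_zero_iff.mpr fun ℓ _ => sub_ne_zero.mpr (hP ξ hξ ℓ))
      (prod_ne_zero_iff.mpr fun ℓ _ => sub_ne_zero.mpr (hQ η hη ℓ))
  have hsum : ∀ ξ ∈ sphere (0 : ℂ) R₁, ∀ η ∈ sphere (0 : ℂ) R₂,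
      ∑ p : Fin k × Fin k, G p.1 p.2 ξ η = A ξ η / ((ξ ^ 2 - x j ^ 2) * (η - y m)) := by
    intro ξ hξ η hη
    rw [div_eq_mul_inv, ← sum_sum_newtonMatrix_mul_div _ _ j m (hP ξ hξ) (hQ η hη)]
    simp only [G, Fintype.sum_prod_type, mul_sum]
    refine sum_congr rfl fun j' _ => sum_congr rfl fun m' _ => ?_
    ring
  calc _ = ((2 * π * I) ^ 2)⁻¹ * (x j *
        ∑ p : Fin k × Fin k, ∮ ξ in C(0, R₁), ∮ η in C(0, R₂), G p.1 p.2 ξ η) := by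
        simp only [G, circleIntegral.integral_const_mul, Fintype.sum_prod_type, mul_sum]
        refine sum_congr rfl fun j' _ => sum_congr rfl fun m' _ => ?_
        ring
    _ = ((2 * π * I) ^ 2)⁻¹ * (x j * ∮ ξ in C(0, R₁), ∮ η in C(0, R₂),
          A ξ η / ((ξ ^ 2 - x j ^ 2) * (η - y m))) := by
        rw [← circleIntegral_circleIntegral_finsetSum hR₁ hR₂ fun p _ => hG p.1 p.2]
        congr 2
        exact circleIntegral.integral_congr hR₁ fun ξ hξ =>
          circleIntegral.integral_congr hR₂ fun η hη => hsum ξ hξ η hη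
    _ = A (x j) (y m) := by
        rw [circleIntegral_circleIntegral_div_sq_sub_sq_mul_sub hA₁ hA₂
          (mem_ball_zero_iff.mpr (hx j)) (mem_ball_zero_iff.mpr (hy m)) hodd]
        field_simp [pi_ne_zero]

theorem of_eq_diagonal_mul_newtonMatrix_mul {k : ℕ} {A : ℂ → ℂ → ℂ} {R₁ R₂ : ℝ}
    (hA : AnalyticOnNhd ℂ (Function.uncurry A) (closedBall 0 R₁ ×ˢ closedBall 0 R₂))
    {x y : Fin k → ℂ} (hx : ∀ j, ‖x j‖ < R₁) (hy : ∀ m, ‖y m‖ < R₂)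
    (hodd : ∀ j m, A (-x j) (y m) = -A (x j) (y m)) :
    of (fun j m => A (x j) (y m)) =
      diagonal x * newtonMatrix (fun ℓ => x ℓ ^ 2) *
        of (fun j m => ((2 * π * I) ^ 2)⁻¹ * ∮ ξ in C(0, R₁), ∮ η in C(0, R₂),
          A ξ η / ((∏ ℓ ∈ Iic j, (ξ ^ 2 - x ℓ ^ 2)) * ∏ ℓ ∈ Iic m, (η - y ℓ))) *
        (newtonMatrix y)ᵀ := by
  ext j m
  have hA₁ : DifferentiableOn ℂ (fun ξ => A ξ (y m)) (closedBall 0 R₁) :=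
    hA.differentiableOn.comp (f := fun ξ => (ξ, y m)) (by fun_prop)
      fun ξ hξ => ⟨hξ, mem_closedBall_zero_iff.mpr (hy m).le⟩
  have hA₂ : ∀ ξ ∈ sphere (0 : ℂ) R₁, DifferentiableOn ℂ (A ξ) (closedBall 0 R₂) :=
    fun ξ hξ => hA.differentiableOn.comp (f := fun η => (ξ, η)) (by fun_prop)
      fun η hη => ⟨sphere_subset_closedBall hξ, hη⟩
  have hcont : ContinuousOn (Function.uncurry A) (sphere 0 R₁ ×ˢ sphere 0 R₂) :=
    hA.continuousOn.mono (prod_mono sphere_subset_closedBall sphere_subset_closedBall)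
  rw [Matrix.mul_assoc, Matrix.mul_assoc, diagonal_mul]
  simp only [mul_apply, of_apply, transpose_apply]
  exact (mul_sum_newtonMatrix_mul_sum_circleIntegral hcont hA₁ hA₂ hx hy (hodd j m)).symm

theorem det_factorisation_odd_general {k : ℕ} (R1s R2s : ℝ)
    (A : ℂ → ℂ → ℂ)
    (hA : AnalyticOnNhd ℂ (fun p : ℂ × ℂ => A p.1 p.2)
      {p : ℂ × ℂ | ‖p.1‖ < R1s ∧ ‖p.2‖ < R2s})
    (hodd : ∀ x y : ℂ, ‖x‖ < R1s → ‖y‖ < R2s → A (-x) y = -A x y)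
    (x y : Fin k → ℂ) (R1 R2 : ℝ)
    (hx : ∀ j, ‖x j‖ < R1) (hR1 : R1 < R1s)
    (hy : ∀ j, ‖y j‖ < R2) (hR2 : R2 < R2s) :
    Matrix.det (Matrix.of fun j m : Fin k => A (x j) (y m)) =
      (∏ j, x j) *
        (∏ p ∈ Finset.univ.filter (fun p : Fin k × Fin k => p.1 < p.2),
          ((x p.2 ^ 2 - x p.1 ^ 2) * (y p.2 - y p.1))) *
        Matrix.det (Matrix.of fun j m : Fin k =>
          ((2 * (Real.pi : ℂ) * Complex.I) ^ 2)⁻¹ *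
            (∮ ξ in C(0, R1), (∮ η in C(0, R2),
              A ξ η / ((∏ ℓ ∈ Finset.univ.filter (· ≤ j), (ξ ^ 2 - x ℓ ^ 2)) *
                ∏ ℓ ∈ Finset.univ.filter (· ≤ m), (η - y ℓ))))) := by
  have hA' : AnalyticOnNhd ℂ (Function.uncurry A) (closedBall 0 R1 ×ˢ closedBall 0 R2) :=
    hA.mono fun p ⟨h₁, h₂⟩ => ⟨(mem_closedBall_zero_iff.mp h₁).trans_lt hR1,
      (mem_closedBall_zero_iff.mp h₂).trans_lt hR2⟩
  have hodd' : ∀ j m, A (-x j) (y m) = -A (x j) (y m) :=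
    fun j m => hodd _ _ ((hx j).trans hR1) ((hy m).trans hR2)
  simp only [filter_ge_eq_Iic]
  rw [of_eq_diagonal_mul_newtonMatrix_mul hA' hx hy hodd', det_mul, det_mul, det_mul,
    det_diagonal, det_transpose, det_newtonMatrix, det_newtonMatrix, det_vandermonde,
    det_vandermonde, prod_filter_lt_eq_prod_prod_Ioi fun i j => (x j ^ 2 - x i ^ 2) * (y j - y i)]
  simp only [prod_mul_distrib]
  ring

/-- Lemma `lem:det_factorisation_taylor`: factorisation of the
determinant of an analytic function of two variables which is odd in the first
variable. -/
theorem det_factorisation_odd {k : ℕ} (hk : 0 < k) (R1s R2s : ℝ)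
    (hR1s : 0 < R1s) (hR2s : 0 < R2s)
    (A : ℂ → ℂ → ℂ)
    (hA : AnalyticOnNhd ℂ (fun p : ℂ × ℂ => A p.1 p.2)
      {p : ℂ × ℂ | ‖p.1‖ < R1s ∧ ‖p.2‖ < R2s})
    (hodd : ∀ x y : ℂ, ‖x‖ < R1s → ‖y‖ < R2s → A (-x) y = -A x y)
    (x y : Fin k → ℂ) (R1 R2 : ℝ)
    (hx : ∀ j, ‖x j‖ < R1) (hR1 : R1 < R1s)
    (hy : ∀ j, ‖y j‖ < R2) (hR2 : R2 < R2s) :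
    Matrix.det (Matrix.of fun j m : Fin k => A (x j) (y m)) =
      (∏ j, x j) *
        (∏ p ∈ Finset.univ.filter (fun p : Fin k × Fin k => p.1 < p.2),
          ((x p.2 ^ 2 - x p.1 ^ 2) * (y p.2 - y p.1))) *
        Matrix.det (Matrix.of fun j m : Fin k =>
          ((2 * (Real.pi : ℂ) * Complex.I) ^ 2)⁻¹ *
            (∮ ξ in C(0, R1), (∮ η in C(0, R2),
              A ξ η / ((∏ ℓ ∈ Finset.univ.filter (· ≤ j), (ξ ^ 2 - x ℓ ^ 2)) *
                ∏ ℓ ∈ Finset.univ.filter (· ≤ m), (η - y ℓ))))) :=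
  det_factorisation_odd_general R1s R2s A hA hodd x y R1 R2 hx hR1 hy hR2
end

section
/- Let k ≥ 1, let 0 ≤ a ≤ k, and let u_1,…,u_k be real numbers with 0 < u_1 < u_2 < ⋯ < u_k. Let D be the determinant of the k×k matrix whose (j,m)-entry equals (−1)^m u_m^{j−1} if j ≤ a and u_m^{j−a−1} if j > a. Then (−1)^{a(a+1)/2} · D > 0; in particular D ≠ 0. -/
/-!
A Laplace expansion along the first `a` rows. Writing column `m` as `ε m • c (u m) + d (u m)`, with
`ε m = (-1)^(m+1)`, `c` the first `a` coordinates and `d` the others, multilinearity gives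
`D = ∑_S (∏_{m ∈ S} ε m) det B_S`, where `B_S` uses `c` on the columns in `S` and `d` elsewhere.
`det B_S` vanishes unless `#S = a`, and then equals `∏_{i < j} g_S(i, j)` with `g_S(i, j) = u j - u i`
for `i, j` on the same side of `S` and `g_S(i, j) = ±1` otherwise. For increasing `u` the sign of
this product times `∏_{m ∈ S} ε m` is `(-1)^(a(a+1)/2)` whatever `S` is, so nothing cancels.
-/

open Finset Matrix

theorem Matrix.det_eq_zero_of_card_lt_of_apply_eq_zero {n R : Type*} [Fintype n] [DecidableEq n]
    [CommRing R] (M : Matrix n n R) {T J : Finset n} (hM : ∀ i ∈ T, ∀ j ∉ J, M i j = 0)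
    (hTJ : #J < #T) : M.det = 0 := by
  rw [← det_transpose, det_apply]
  refine sum_eq_zero fun σ _ => ?_
  obtain ⟨i, hiT, hiJ⟩ : ∃ i ∈ T, σ i ∉ J := by
    by_contra! h
    exact hTJ.not_ge (card_le_card_of_injOn σ h σ.injective.injOn)
  exact smul_eq_zero_of_right _ (prod_eq_zero (mem_univ i) (hM i hiT _ hiJ))

theorem Matrix.det_vandermonde_eq_prod_prod_Iio {R : Type*} [CommRing R] {n : ℕ}
    (v : Fin n → R) : (vandermonde v).det = ∏ j, ∏ i < j, (v j - v i) := by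
  rw [det_vandermonde]
  exact prod_comm' (by simp)

theorem Fin.prod_prod_Iio_add {M : Type*} [CommMonoid M] {a b : ℕ}
    (f : Fin (a + b) → Fin (a + b) → M) (hf : ∀ i j, f (castAdd b i) (natAdd a j) = 1) :
    ∏ j, ∏ i < j, f i j =
      (∏ j, ∏ i < j, f (castAdd b i) (castAdd b j)) * ∏ j, ∏ i < j, f (natAdd a i) (natAdd a j) := by
  have hcast (i j : Fin a) : castAdd b i < castAdd b j ↔ i < j := Iff.rfl
  have hlt (i : Fin b) (j : Fin a) : ¬natAdd a i < castAdd b j := by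
    simp only [Fin.lt_def, val_natAdd, val_castAdd]
    omega
  simp_rw [← filter_gt_eq_Iio, prod_filter, Fin.prod_univ_add]
  simp [hf, hlt, hcast, natAdd_lt_natAdd_iff]

theorem Finset.exists_perm_mem_iff_mem {α : Type*} [Fintype α] [DecidableEq α] {s t : Finset α}
    (h : #s = #t) : ∃ π : Equiv.Perm α, ∀ i, i ∈ s ↔ π i ∈ t := by
  have hs : Fintype.card s = Fintype.card t := by simpa
  have hc : Fintype.card {i // i ∉ s} = Fintype.card {i // i ∉ t} := by
    simp [Fintype.card_subtype_compl, h]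
  refine ⟨Equiv.subtypeCongr (Fintype.equivOfCardEq hs) (Fintype.equivOfCardEq hc), fun i => ?_⟩
  by_cases hi : i ∈ s
  · simp [Equiv.subtypeCongr, hi]
  · simpa [Equiv.subtypeCongr, hi] using (Fintype.equivOfCardEq hc ⟨i, hi⟩).2

theorem Finset.sum_card_filter_lt {α : Type*} [LinearOrder α] (s : Finset α) :
    ∑ j ∈ s, #{i ∈ s | i < j} = (#s).choose 2 := by
  induction s using Finset.induction_on_max with
  | empty => simp
  | insert m s hlt ih =>
    have hm : m ∉ s := fun hm => (hlt m hm).false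
    have hfm : ({i ∈ insert m s | i < m} : Finset α) = s := by
      ext i
      simp only [mem_filter, mem_insert]
      constructor
      · rintro ⟨rfl | hi, h⟩
        exacts [absurd h (lt_irrefl _), hi]
      · exact fun hi => ⟨Or.inr hi, hlt i hi⟩
    have hfj : ∀ j ∈ s, ({i ∈ insert m s | i < j} : Finset α) = {i ∈ s | i < j} := by
      intro j hj
      rw [filter_insert, if_neg (hlt j hj).not_gt]
    rw [sum_insert hm, hfm, sum_congr rfl fun j hj => by rw [hfj j hj], ih,
      card_insert_of_notMem hm, Nat.choose_succ_succ', Nat.choose_one_right]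

section BlockDiff

variable {ι R : Type*} [DecidableEq ι] [CommRing R]

def blockDiff (S : Finset ι) (x : ι → R) (i j : ι) : R :=
  if (i ∈ S ↔ j ∈ S) then x j - x i else if i ∈ S then 1 else -1

theorem blockDiff_antisymm (S : Finset ι) (x : ι → R) (i j : ι) :
    blockDiff S x i j = -blockDiff S x j i := by
  unfold blockDiff
  by_cases hi : i ∈ S <;> by_cases hj : j ∈ S <;> simp [hi, hj]

theorem blockDiff_comp {S T : Finset ι} (π : Equiv.Perm ι) (hπ : ∀ i, i ∈ T ↔ π i ∈ S)
    (x : ι → R) (i j : ι) : blockDiff S x (π i) (π j) = blockDiff T (x ∘ π) i j := by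
  simp [blockDiff, hπ]

theorem blockDiff_eq_mul (S : Finset ι) (x : ι → R) (i j : ι) :
    blockDiff S x i j =
      (if i ∉ S ∧ j ∈ S then -1 else 1) * (if (i ∈ S ↔ j ∈ S) then x j - x i else 1) := by
  unfold blockDiff
  by_cases hi : i ∈ S <;> by_cases hj : j ∈ S <;> simp [hi, hj]

end BlockDiff

section BlockVandermonde

variable {R : Type*} [CommRing R] {n : ℕ}

def blockVandermonde (a : ℕ) (S : Finset (Fin n)) (x : Fin n → R) : Matrix (Fin n) (Fin n) R :=
  of fun i j => if i ∈ S then (if (j : ℕ) < a then x i ^ (j : ℕ) else 0)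
    else if (j : ℕ) < a then 0 else x i ^ ((j : ℕ) - a)

theorem det_eq_sum_blockVandermonde (a : ℕ) (ε x : Fin n → R) :
    (of fun j m : Fin n => if (j : ℕ) < a then ε m * x m ^ (j : ℕ) else x m ^ ((j : ℕ) - a)).det =
      ∑ S : Finset (Fin n), (∏ m ∈ S, ε m) * (blockVandermonde a S x).det := by
  let A : Fin n → Fin n → R := fun m j => if (j : ℕ) < a then ε m * x m ^ (j : ℕ) else 0
  let B : Fin n → Fin n → R := fun m j => if (j : ℕ) < a then 0 else x m ^ ((j : ℕ) - a)
  have hAB : (of fun j m : Fin n =>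
      if (j : ℕ) < a then ε m * x m ^ (j : ℕ) else x m ^ ((j : ℕ) - a))ᵀ = of (A + B) := by
    ext m j
    by_cases hj : (j : ℕ) < a <;> simp [A, B, hj]
  rw [← det_transpose, hAB]
  refine ((detRowAlternating : (Fin n → R) [⋀^Fin n]→ₗ[R] R).map_add_univ A B).trans
    (sum_congr rfl fun S _ => ?_)
  have hS : of (S.piecewise A B) =
      of fun m j => (if m ∈ S then ε m else 1) * blockVandermonde a S x m j := by
    ext m j
    by_cases hm : m ∈ S <;> by_cases hj : (j : ℕ) < a <;> simp [A, B, blockVandermonde, hm, hj]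
  rw [show detRowAlternating (S.piecewise A B) = (of (S.piecewise A B)).det from rfl, hS,
    det_mul_column, prod_ite_mem, univ_inter]

theorem det_blockVandermonde_of_card_ne {a : ℕ} (ha : a ≤ n) {S : Finset (Fin n)} (hS : #S ≠ a)
    (x : Fin n → R) : (blockVandermonde a S x).det = 0 := by
  have hcard : #{j : Fin n | (j : ℕ) < a} = a := by simpa [Fin.card_filter_val_lt]
  rcases hS.lt_or_gt with hlt | hgt
  · refine det_eq_zero_of_card_lt_of_apply_eq_zero _ (T := Sᶜ) (J := {j | ¬(j : ℕ) < a}) ?_ ?_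
    · intro i hi j hj
      simp_all [blockVandermonde]
    · rw [filter_not, card_sdiff_of_subset (filter_subset _ _), card_compl, hcard]
      simp only [card_univ, Fintype.card_fin]
      omega
  · refine det_eq_zero_of_card_lt_of_apply_eq_zero _ (T := S) (J := {j | (j : ℕ) < a}) ?_
      (by rwa [hcard])
    intro i hi j hj
    simp_all [blockVandermonde]

theorem blockVandermonde_submatrix {a : ℕ} {S T : Finset (Fin n)} (π : Equiv.Perm (Fin n))
    (hπ : ∀ i, i ∈ T ↔ π i ∈ S) (x : Fin n → R) :
    (blockVandermonde a S x).submatrix π id = blockVandermonde a T (x ∘ π) := by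
  ext i j
  simp [blockVandermonde, hπ]

theorem det_blockVandermonde_initial (a b : ℕ) (x : Fin (a + b) → R) :
    (blockVandermonde a {i | (i : ℕ) < a} x).det =
      ∏ j, ∏ i < j, blockDiff ({i | (i : ℕ) < a} : Finset (Fin (a + b))) x i j := by
  have hblocks : (blockVandermonde a {i | (i : ℕ) < a} x).submatrix finSumFinEquiv finSumFinEquiv =
      fromBlocks (vandermonde (x ∘ Fin.castAdd b)) 0 0 (vandermonde (x ∘ Fin.natAdd a)) := by
    ext (i | i) (j | j) <;> simp [blockVandermonde, vandermonde]
  rw [← det_submatrix_equiv_self finSumFinEquiv, hblocks, det_fromBlocks_zero₁₂,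
    det_vandermonde_eq_prod_prod_Iio, det_vandermonde_eq_prod_prod_Iio,
    Fin.prod_prod_Iio_add _ (by simp [blockDiff])]
  simp [blockDiff]

/-- Relabelling the rows by `π` multiplies both sides by `sign π`, which reduces the claim to
`det_blockVandermonde_initial`. -/
theorem det_blockVandermonde {a b : ℕ} {S : Finset (Fin (a + b))} (hS : #S = a)
    (x : Fin (a + b) → R) :
    (blockVandermonde a S x).det = ∏ j, ∏ i < j, blockDiff S x i j := by
  obtain ⟨π, hπ⟩ := exists_perm_mem_iff_mem (s := {i : Fin (a + b) | (i : ℕ) < a}) (t := S)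
    (by rw [hS, Fin.card_filter_val_lt]; omega)
  have h := det_blockVandermonde_initial a b (x ∘ π)
  simp_rw [← blockVandermonde_submatrix π hπ, det_permute, ← blockDiff_comp π hπ,
    Equiv.Perm.prod_Iio_comp_eq_sign_mul_prod π (blockDiff_antisymm S x)] at h
  have hsign : ((Equiv.Perm.sign π : ℤ) : R) * (Equiv.Perm.sign π : ℤ) = 1 := by
    rw [← Int.cast_mul, ← Units.val_mul, Int.units_mul_self, Units.val_one, Int.cast_one]
  simpa [← mul_assoc, hsign] using congrArg (((Equiv.Perm.sign π : ℤ) : R) * ·) h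

theorem prod_neg_one_pow_mul_prod_prod_Iio (S : Finset (Fin n)) :
    (∏ m ∈ S, (-1 : R) ^ ((m : ℕ) + 1)) * ∏ j, ∏ i < j, (if i ∉ S ∧ j ∈ S then -1 else 1) =
      (-1) ^ (#S + 1).choose 2 := by
  have hsplit (j : Fin n) : (j : ℕ) = #{i ∈ S | i < j} + #{i ∈ Iio j | i ∉ S} := by
    rw [← Fin.card_Iio j, ← card_filter_add_card_filter_not (· ∈ S)]
    congr 2
    ext i
    simp [and_comm]
  have hj (j : Fin n) : (-1 : R) ^ ((j : ℕ) + 1) * (-1) ^ #{i ∈ Iio j | i ∉ S} =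
      (-1) ^ (#{i ∈ S | i < j} + 1) := by
    rw [hsplit j, ← pow_add]
    generalize #{i ∈ S | i < j} = p
    generalize #{i ∈ Iio j | i ∉ S} = c
    rw [show p + c + 1 + c = p + 1 + 2 * c by ring, pow_add, pow_mul, neg_one_sq, one_pow, mul_one]
  have hcross : ∏ j, ∏ i < j, (if i ∉ S ∧ j ∈ S then (-1 : R) else 1) =
      ∏ j ∈ S, (-1) ^ #{i ∈ Iio j | i ∉ S} := by
    simp [ite_and, prod_ite]
  rw [hcross, ← prod_mul_distrib, prod_congr rfl fun j _ => hj j, prod_pow_eq_pow_sum,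
    sum_add_distrib, sum_card_filter_lt, sum_const, smul_eq_mul, mul_one,
    Nat.choose_succ_succ', Nat.choose_one_right, add_comm]

end BlockVandermonde

theorem neg_one_pow_mul_det_blockVandermonde_pos {a b : ℕ} {S : Finset (Fin (a + b))}
    (hS : #S = a) {x : Fin (a + b) → ℝ} (hx : StrictMono x) :
    0 < (-1 : ℝ) ^ (a + 1).choose 2 *
      ((∏ m ∈ S, (-1 : ℝ) ^ ((m : ℕ) + 1)) * (blockVandermonde a S x).det) := by
  simp_rw [det_blockVandermonde hS, blockDiff_eq_mul, prod_mul_distrib]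
  rw [← mul_assoc (∏ m ∈ S, _), prod_neg_one_pow_mul_prod_prod_Iio, hS, ← mul_assoc, ← pow_add,
    ← two_mul, pow_mul, neg_one_sq, one_pow, one_mul]
  refine prod_pos fun j _ => prod_pos fun i hi => ?_
  split_ifs
  exacts [sub_pos.2 (hx (mem_Iio.1 hi)), one_pos]

theorem vandermonde_like_det_ne_zero_general (k : ℕ) (a : ℕ) (ha : a ≤ k)
    (u : Fin k → ℝ) (humono : StrictMono u) :
    0 < (-1 : ℝ) ^ (a * (a + 1) / 2) *
        Matrix.det (Matrix.of fun j m : Fin k =>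
          if (j : ℕ) < a then (-1 : ℝ) ^ ((m : ℕ) + 1) * u m ^ (j : ℕ)
          else u m ^ ((j : ℕ) - a)) ∧
      Matrix.det (Matrix.of fun j m : Fin k =>
          if (j : ℕ) < a then (-1 : ℝ) ^ ((m : ℕ) + 1) * u m ^ (j : ℕ)
          else u m ^ ((j : ℕ) - a)) ≠ 0 := by
  obtain ⟨b, rfl⟩ := Nat.exists_eq_add_of_le ha
  obtain ⟨S₀, -, hS₀⟩ := exists_subset_card_eq (s := (univ : Finset (Fin (a + b)))) (n := a)
    (by simp)
  have hexp : a * (a + 1) / 2 = (a + 1).choose 2 := by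
    rw [Nat.choose_two_right, Nat.add_sub_cancel, mul_comm]
  have hpos : 0 < (-1 : ℝ) ^ (a * (a + 1) / 2) *
      Matrix.det (Matrix.of fun j m : Fin (a + b) =>
        if (j : ℕ) < a then (-1 : ℝ) ^ ((m : ℕ) + 1) * u m ^ (j : ℕ)
        else u m ^ ((j : ℕ) - a)) := by
    rw [det_eq_sum_blockVandermonde, mul_sum, hexp]
    refine sum_pos' (fun S _ => ?_) ⟨S₀, mem_univ _, neg_one_pow_mul_det_blockVandermonde_pos hS₀ humono⟩
    by_cases hS : #S = a
    · exact (neg_one_pow_mul_det_blockVandermonde_pos hS humono).le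
    · rw [det_blockVandermonde_of_card_ne ha hS, mul_zero, mul_zero]
  exact ⟨hpos, right_ne_zero_of_mul hpos.ne'⟩

/-- Lemma `lem:non_zero_det_vandermondelike`: for
`0 < u₁ < ⋯ < u_k`, the Vandermonde-like block determinant with entries
`(-1)^m u_m^{j-1}` (for rows `j ≤ a`) and `u_m^{j-a-1}` (for rows `j > a`) is nonzero;
more precisely, `(-1)^{a(a+1)/2} D > 0`. (Indices below are 0-based.) -/
theorem vandermonde_like_det_ne_zero (k : ℕ) (hk : 0 < k) (a : ℕ) (ha : a ≤ k)
    (u : Fin k → ℝ) (hupos : ∀ j, 0 < u j) (humono : StrictMono u) :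
    0 < (-1 : ℝ) ^ (a * (a + 1) / 2) *
        Matrix.det (Matrix.of fun j m : Fin k =>
          if (j : ℕ) < a then (-1 : ℝ) ^ ((m : ℕ) + 1) * u m ^ (j : ℕ)
          else u m ^ ((j : ℕ) - a)) ∧
      Matrix.det (Matrix.of fun j m : Fin k =>
          if (j : ℕ) < a then (-1 : ℝ) ^ ((m : ℕ) + 1) * u m ^ (j : ℕ)
          else u m ^ ((j : ℕ) - a)) ≠ 0 :=
  vandermonde_like_det_ne_zero_general k a ha u humono
end

section
/- Let k ≥ 1 and let u_1,…,u_k be nonnegative integers. Then there exists a Laurent polynomial Q in the variables x_1,…,x_k with complex coefficients such that for all nonzero x_1,…,x_k ∈ ℂ: Q(x_1,…,x_k) · det_{1≤j,m≤k}( x_j^{m} − x_j^{−m} ) = det_{1≤j,m≤k}( x_j^{u_m} − x_j^{−u_m} ). In other words, the quotient det(x_j^{u_m} − x_j^{−u_m}) / det(x_j^{m} − x_j^{−m}) extends to a Laurent polynomial in x_1,…,x_k. -/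
/-!
With `S` the monic Chebyshev polynomials of the second kind,
`x ^ n - x ^ (-n) = (x - x⁻¹) * S (n - 1) (x + x⁻¹)`. Pulling `x j - (x j)⁻¹` out of row `j`, both
determinants become `det (P m (y j))` with `y j = x j + (x j)⁻¹`. For the denominator `P m = S m` is
monic of degree `m`, so it is the Vandermonde determinant of `y`. For the numerator, the polynomial
`det (P m (X j))` vanishes when `X j = X i`, so it is divisible by every `X j - X i`; these are
pairwise non-associated primes, hence the Vandermonde determinant of the `X j` divides it. The
quotient, evaluated at `y`, is a Laurent polynomial in `x`.
-/

namespace Polynomial.Chebyshev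

theorem sub_inv_mul_S_sub_one_eval_add_inv {K : Type*} [Field K] {x : K} (hx : x ≠ 0) (n : ℤ) :
    (x - x⁻¹) * (S K (n - 1)).eval (x + x⁻¹) = x ^ n - x ^ (-n) := by
  induction n using Polynomial.Chebyshev.induct' with
  | zero => simp
  | one => simp
  | add_two n h₁ h₀ =>
    rw [show (n : ℤ) + 2 - 1 = n + 1 by ring, S_add_one, eval_sub, eval_mul, eval_X]
    rw [add_sub_cancel_right] at h₁
    simp only [neg_add, zpow_add₀ hx, zpow_neg, zpow_ofNat] at h₀ h₁ ⊢
    linear_combination (x + x⁻¹) * h₁ - h₀ + (x ^ (n : ℤ) - (x ^ (n : ℤ))⁻¹) * mul_inv_cancel₀ hx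
  | neg n h =>
    rw [neg_neg, S_neg_sub_one, eval_neg]
    linear_combination -h

theorem S_natCast_monic_and_natDegree {R : Type*} [CommRing R] [Nontrivial R] :
    ∀ n : ℕ, (S R n).Monic ∧ (S R n).natDegree = n
  | 0 => by simp
  | 1 => by simp [monic_X]
  | n + 2 => by
    obtain ⟨hm₁, hd₁⟩ := S_natCast_monic_and_natDegree (R := R) (n + 1)
    obtain ⟨-, hd₀⟩ := S_natCast_monic_and_natDegree (R := R) n
    push_cast at hm₁ hd₁ ⊢
    have hXm : (X * S R (n + 1)).Monic := monic_X.mul hm₁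
    have hXd : (X * S R (n + 1)).natDegree = n + 2 := by
      rw [monic_X.natDegree_mul hm₁, natDegree_X, hd₁]
      ring
    have hlt : (S R n).natDegree < (X * S R (n + 1)).natDegree := by omega
    rw [S_add_two]
    exact ⟨hXm.sub_of_left (degree_lt_degree hlt),
      by rw [natDegree_sub_eq_left_of_natDegree_lt hlt, hXd]⟩

end Polynomial.Chebyshev

namespace MvPolynomial

variable {R σ : Type*} [CommRing R] [DecidableEq σ]

theorem X_sub_X_dvd_sub_aeval_update (i j : σ) (f : MvPolynomial σ R) :
    X i - X j ∣ f - aeval (Function.update X i (X j)) f := by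
  induction f using MvPolynomial.induction_on with
  | C a => simp
  | add p q hp hq => simpa only [map_add, add_sub_add_comm] using dvd_add hp hq
  | mul_X p l hp =>
    rw [map_mul, aeval_X]
    by_cases hl : l = i
    · subst hl
      rw [Function.update_self]
      have : p * X l - aeval (Function.update X l (X j)) p * X j =
          p * (X l - X j) + (p - aeval (Function.update X l (X j)) p) * X j := by ring
      exact this ▸ dvd_add (dvd_mul_left _ _) (hp.mul_right _)
    · rw [Function.update_of_ne hl, ← sub_mul]
      exact hp.mul_right _

theorem X_sub_X_dvd_iff {i j : σ} (hij : i ≠ j) {f : MvPolynomial σ R} :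
    X i - X j ∣ f ↔ aeval (Function.update X i (X j) : σ → MvPolynomial σ R) f = 0 := by
  constructor
  · rintro ⟨g, rfl⟩
    simp [Function.update_of_ne hij.symm]
  · intro h
    simpa only [h, sub_zero] using X_sub_X_dvd_sub_aeval_update i j f

theorem prime_X_sub_X [IsDomain R] {i j : σ} (hij : i ≠ j) :
    Prime (X i - X j : MvPolynomial σ R) := by
  refine ⟨sub_ne_zero.mpr (X_injective.ne hij), fun hu => ?_, fun a b hab => ?_⟩
  · have := hu.map (aeval (Function.update X i (X j) : σ → MvPolynomial σ R))
    simp [Function.update_of_ne hij.symm] at this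
  · simpa only [X_sub_X_dvd_iff hij, map_mul, mul_eq_zero] using hab

theorem eq_and_eq_or_eq_and_eq_of_X_sub_X_dvd [Nontrivial R] {a b c d : σ} (hab : a ≠ b)
    (hcd : c ≠ d) (h : (X a - X b : MvPolynomial σ R) ∣ X c - X d) :
    a = c ∧ b = d ∨ a = d ∧ b = c := by
  rw [X_sub_X_dvd_iff hab, map_sub, aeval_X, aeval_X, sub_eq_zero] at h
  by_cases hc : c = a <;> by_cases hd : d = a <;>
    simp_all [Function.update_of_ne, (X_injective (σ := σ) (R := R)).eq_iff]

end MvPolynomial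

theorem Finset.prod_dvd_of_prime_of_pairwise_not_associated {M ι : Type*}
    [CommMonoidWithZero M] [IsCancelMulZero M] {s : Finset ι} {p : ι → M} {n : M}
    (hp : ∀ i ∈ s, Prime (p i)) (hne : (s : Set ι).Pairwise fun i j => ¬Associated (p i) (p j))
    (hdvd : ∀ i ∈ s, p i ∣ n) :
    ∏ i ∈ s, p i ∣ n := by
  classical
  refine Multiset.prod_primes_dvd n (by simpa using hp) (by simpa using hdvd) fun a => ?_
  rw [Multiset.countP_map, ← Finset.filter_val, Finset.card_val, Finset.card_le_one]
  intro i hi j hj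
  simp only [Finset.mem_filter] at hi hj
  by_contra hij
  exact hne hi.1 hj.1 hij (hi.2.symm.trans hj.2)

namespace Matrix

open MvPolynomial

theorem det_vandermonde_X_dvd_det_aeval {R : Type*} [CommRing R] [IsDomain R] {k : ℕ}
    (P : Fin k → Polynomial R) :
    (vandermonde (X : Fin k → MvPolynomial (Fin k) R)).det ∣
      (of fun j m => Polynomial.aeval (X j : MvPolynomial (Fin k) R) (P m)).det := by
  rw [det_vandermonde, Finset.prod_sigma']
  refine Finset.prod_dvd_of_prime_of_pairwise_not_associated ?_ ?_ ?_
  · rintro ⟨i, j⟩ hij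
    exact prime_X_sub_X (Finset.mem_Ioi.mp (Finset.mem_sigma.mp hij).2).ne'
  · rintro ⟨i, j⟩ hij ⟨i', j'⟩ hij' hne hassoc
    have hlt := Finset.mem_Ioi.mp (Finset.mem_sigma.mp hij).2
    have hlt' := Finset.mem_Ioi.mp (Finset.mem_sigma.mp hij').2
    rcases eq_and_eq_or_eq_and_eq_of_X_sub_X_dvd hlt.ne' hlt'.ne' hassoc.dvd with
      ⟨rfl, rfl⟩ | ⟨rfl, rfl⟩
    · exact hne rfl
    · exact lt_asymm hlt hlt'
  · rintro ⟨i, j⟩ hij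
    have hlt := Finset.mem_Ioi.mp (Finset.mem_sigma.mp hij).2
    rw [X_sub_X_dvd_iff hlt.ne', AlgHom.map_det]
    refine det_zero_of_row_eq hlt.ne' (funext fun m => ?_)
    simp only [AlgHom.mapMatrix_apply, map_apply, of_apply, ← Polynomial.aeval_algHom_apply,
      aeval_X, Function.update_self, Function.update_of_ne hlt.ne]

theorem exists_det_eval_eq_det_vandermonde_mul {R : Type*} [CommRing R] [IsDomain R] {k : ℕ}
    (P : Fin k → Polynomial R) :
    ∃ Q : MvPolynomial (Fin k) R, ∀ y : Fin k → R,
      (of fun j m => (P m).eval (y j)).det = (vandermonde y).det * eval y Q := by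
  obtain ⟨Q, hQ⟩ := det_vandermonde_X_dvd_det_aeval P
  refine ⟨Q, fun y => ?_⟩
  have hy := congrArg (eval y) hQ
  rw [map_mul, RingHom.map_det, RingHom.map_det] at hy
  convert hy using 3 <;> ext j m
  · rw [RingHom.mapMatrix_apply, map_apply, of_apply, of_apply, ← aeval_eq_eval,
      ← Polynomial.aeval_algHom_apply, aeval_X, Polynomial.coe_aeval_eq_eval]
  · simp [vandermonde_apply]

open Polynomial.Chebyshev in
theorem det_zpow_sub_zpow_neg {K ι : Type*} [Field K] [Fintype ι] [DecidableEq ι]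
    {x : ι → K} (hx : ∀ j, x j ≠ 0) (n : ι → ℤ) :
    (of fun j m => x j ^ n m - x j ^ (-n m)).det =
      (∏ j, (x j - (x j)⁻¹)) * (of fun j m => (S K (n m - 1)).eval (x j + (x j)⁻¹)).det := by
  rw [← det_mul_column]
  congr 1
  ext j m
  exact (sub_inv_mul_S_sub_one_eval_add_inv (hx j) (n m)).symm

end Matrix

section Laurent

variable {K ι : Type*} [Field K] [Fintype ι]

def zpowMonomialHom (x : ι → K) (hx : ∀ j, x j ≠ 0) : Multiplicative (ι → ℤ) →* K where
  toFun a := ∏ j, x j ^ a.toAdd j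
  map_one' := by simp
  map_mul' a b := by simp [zpow_add₀ (hx _), Finset.prod_mul_distrib]

theorem exists_laurent_eq_eval_add_inv (Q : MvPolynomial ι K) :
    ∃ c : (ι → ℤ) →₀ K, ∀ x : ι → K, (∀ j, x j ≠ 0) →
      ∑ a ∈ c.support, c a * ∏ j, x j ^ a j = MvPolynomial.eval (fun j => x j + (x j)⁻¹) Q := by
  classical
  -- `Y j` is the Laurent polynomial `x j + (x j)⁻¹`.
  let Y : ι → AddMonoidAlgebra K (ι → ℤ) := fun j =>
    .single (Pi.single j 1) 1 + .single (-Pi.single j 1) 1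
  refine ⟨(MvPolynomial.aeval Y Q).coeff, fun x hx => ?_⟩
  let Φ := AddMonoidAlgebra.lift K K (ι → ℤ) (zpowMonomialHom x hx)
  have hY : ∀ j, Φ (Y j) = x j + (x j)⁻¹ := fun j => by
    simp [Φ, Y, zpowMonomialHom, Pi.single_apply]
  calc ∑ a ∈ (MvPolynomial.aeval Y Q).coeff.support, _ = Φ (MvPolynomial.aeval Y Q) := by
        rw [AddMonoidAlgebra.lift_apply', Finsupp.sum]
        rfl
    _ = _ := by rw [MvPolynomial.comp_aeval_apply, funext hY, MvPolynomial.aeval_eq_eval]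

end Laurent

open Polynomial.Chebyshev in
theorem symplectic_character_is_laurent_general (k : ℕ) (u : Fin k → ℕ) :
    ∃ c : (Fin k → ℤ) →₀ ℂ,
      ∀ x : Fin k → ℂ, (∀ j, x j ≠ 0) →
        (∑ a ∈ c.support, c a * ∏ j, x j ^ a j) *
            Matrix.det (Matrix.of fun j m : Fin k =>
              x j ^ ((m : ℕ) + 1 : ℤ) - x j ^ (-((m : ℕ) + 1) : ℤ)) =
          Matrix.det (Matrix.of fun j m : Fin k =>
            x j ^ (u m : ℤ) - x j ^ (-(u m : ℤ))) := by
  obtain ⟨Q, hQ⟩ := Matrix.exists_det_eval_eq_det_vandermonde_mul fun m => S ℂ ((u m : ℤ) - 1)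
  obtain ⟨c, hc⟩ := exists_laurent_eq_eval_add_inv Q
  refine ⟨c, fun x hx => ?_⟩
  rw [hc x hx, Matrix.det_zpow_sub_zpow_neg hx, Matrix.det_zpow_sub_zpow_neg hx (fun m => u m), hQ]
  simp only [add_sub_cancel_right]
  rw [← Matrix.det_eval_matrixOfPolynomials_eq_det_vandermonde _ _
    (fun m => (S_natCast_monic_and_natDegree (m : ℕ)).2)
    (fun m => (S_natCast_monic_and_natDegree (m : ℕ)).1)]
  ring

/-- Lemma `lem:det_quotient_laurent_polynomial`: the quotient
`det(xⱼ^{uₘ} - xⱼ^{-uₘ}) / det(xⱼ^{m} - xⱼ^{-m})` extends to a Laurent polynomial in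
`x₁,…,x_k`: there is a finitely supported family of coefficients `c` whose associated
Laurent polynomial multiplied by the denominator equals the numerator at every point
with all coordinates nonzero. -/
theorem symplectic_character_is_laurent (k : ℕ) (hk : 0 < k) (u : Fin k → ℕ) :
    ∃ c : (Fin k → ℤ) →₀ ℂ,
      ∀ x : Fin k → ℂ, (∀ j, x j ≠ 0) →
        (∑ a ∈ c.support, c a * ∏ j, x j ^ a j) *
            Matrix.det (Matrix.of fun j m : Fin k =>
              x j ^ ((m : ℕ) + 1 : ℤ) - x j ^ (-((m : ℕ) + 1) : ℤ)) =
          Matrix.det (Matrix.of fun j m : Fin k =>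
            x j ^ (u m : ℤ) - x j ^ (-(u m : ℤ))) :=
  symplectic_character_is_laurent_general k u
end

section
/- (Aomoto-type evaluations for Selberg integrals.) Let k ≥ 1. With ⟨f⟩_L = ∫_{[0,∞)^k} f(x) · (∏_{j=1}^k √x_j) · (∏_{1≤j<m≤k}(x_m − x_j))² · e^{−(x_1+⋯+x_k)} dx and ⟨f⟩_H = ∫_{ℝ^k} f(x) · (∏_{1≤j<m≤k}(x_m − x_j))² · e^{−(x_1²+⋯+x_k²)/2} dx, one has ⟨ ∑_{j=1}^k x_j ⟩_L = (k² + k/2) · ⟨1⟩_L and ⟨ ∑_{j=1}^k x_j² ⟩_H = k² · ⟨1⟩_H. -/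
/-!
For `u` homogeneous of degree `d` and `v ≥ 0` homogeneous of degree `m` on a cone in `ℝⁿ`,
substituting `x ↦ t^{1/m} x` gives `∫ u e^{-t v} = t^{-(d+n)/m} ∫ u e^{-v}`; differentiating
at `t = 1` under the integral sign yields `∫ v u e^{-v} = (d + n)/m · ∫ u e^{-v}`.
With `Δ = ∏_{i<j} (xⱼ - xᵢ)`, homogeneous of degree `N = k(k-1)/2`, the Laguerre case has
`u = ∏ √xⱼ · Δ²`, `d = k/2 + 2N`, `v = ∑ xⱼ`, `m = 1`, and the Hermite case `u = Δ²`, `d = 2N`,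
`v = ∑ xⱼ²/2`, `m = 2`; in both `2N + k = k²`.
-/

open MeasureTheory Real Module
open scoped Pointwise Nat

section Derivative

variable {α : Type*} [MeasurableSpace α] {μ : Measure α} {u v : α → ℝ}

theorem hasDerivAt_integral_mul_exp_neg_mul (hu : AEStronglyMeasurable u μ)
    (hv : AEStronglyMeasurable v μ) (hv0 : ∀ᵐ x ∂μ, 0 ≤ v x)
    (hint : ∀ s > 0, Integrable (fun x => u x * exp (-(s * v x))) μ) :
    HasDerivAt (fun t => ∫ x, u x * exp (-(t * v x)) ∂μ)
      (-∫ x, v x * (u x * exp (-v x)) ∂μ) 1 := by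
  have hmeas (t : ℝ) : AEStronglyMeasurable (fun x => u x * exp (-(t * v x))) μ :=
    hu.mul (continuous_exp.comp_aestronglyMeasurable (hv.const_mul t).neg)
  -- For `t ≥ 1/2`: `v e^{-t v} ≤ v e^{-v/2} ≤ 4 e^{-v/4}`, since `v / 4 ≤ e^{v/4}`.
  have hbound : ∀ᵐ x ∂μ, ∀ t ∈ Metric.ball (1 : ℝ) (1 / 2),
      ‖-(v x * (u x * exp (-(t * v x))))‖ ≤ 4 * ‖u x * exp (-(1 / 4 * v x))‖ := by
    filter_upwards [hv0] with x hx t ht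
    have ht : 1 / 2 ≤ t := by rw [Real.ball_eq_Ioo] at ht; linarith [ht.1]
    have hsplit : exp (-(1 / 2 * v x)) = exp (-(1 / 4 * v x)) * exp (-(v x / 4)) := by
      rw [← exp_add]; ring_nf
    have hdecay : v x * exp (-(v x / 4)) ≤ 4 := by
      rw [exp_neg, ← div_eq_mul_inv, div_le_iff₀ (exp_pos _)]
      linarith [add_one_le_exp (v x / 4)]
    simp only [norm_neg, norm_mul, Real.norm_eq_abs, abs_of_nonneg hx, abs_exp]
    calc v x * (|u x| * exp (-(t * v x)))
        ≤ v x * (|u x| * exp (-(1 / 2 * v x))) := by gcongr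
      _ = |u x| * exp (-(1 / 4 * v x)) * (v x * exp (-(v x / 4))) := by rw [hsplit]; ring
      _ ≤ 4 * (|u x| * exp (-(1 / 4 * v x))) := by
        rw [mul_comm 4]; exact mul_le_mul_of_nonneg_left hdecay (by positivity)
  have hderiv := hasDerivAt_integral_of_dominated_loc_of_deriv_le
    (F' := fun t x => -(v x * (u x * exp (-(t * v x)))))
    (Metric.ball_mem_nhds (1 : ℝ) one_half_pos) (.of_forall hmeas)
    (by simpa using hint 1 one_pos) (hv.mul (hmeas 1)).neg hbound
    ((hint _ (by norm_num)).norm.const_mul 4) (.of_forall fun x t _ => ?_)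
  · simpa [integral_neg] using hderiv.2
  · have hlin : HasDerivAt (fun t => -(t * v x)) (-v x) t := (hasDerivAt_mul_const (v x)).neg
    exact (hlin.exp.const_mul (u x)).congr_deriv (by ring)

theorem integral_mul_mul_exp_neg_of_rpow_scaling {c : ℝ} (hu : AEStronglyMeasurable u μ)
    (hv : AEStronglyMeasurable v μ) (hv0 : ∀ᵐ x ∂μ, 0 ≤ v x)
    (hint : ∀ s > 0, Integrable (fun x => u x * exp (-(s * v x))) μ)
    (hscale : ∀ t > 0, ∫ x, u x * exp (-(t * v x)) ∂μ =
      t ^ (-c) * ∫ x, u x * exp (-v x) ∂μ) :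
    ∫ x, v x * (u x * exp (-v x)) ∂μ = c * ∫ x, u x * exp (-v x) ∂μ := by
  have hrpow : HasDerivAt (fun t => ∫ x, u x * exp (-(t * v x)) ∂μ)
      (-c * ∫ x, u x * exp (-v x) ∂μ) 1 := by
    refine HasDerivAt.congr_of_eventuallyEq ?_
      (eventually_gt_nhds one_pos |>.mono fun t ht => hscale t ht)
    simpa using (hasDerivAt_rpow_const (x := 1) (p := -c) (.inl one_ne_zero)).mul_const
      (∫ x, u x * exp (-v x) ∂μ)
  have := (hasDerivAt_integral_mul_exp_neg_mul hu hv hv0 hint).unique hrpow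
  linarith

end Derivative

section Homogeneous

variable {E : Type*} [NormedAddCommGroup E] [NormedSpace ℝ E] {S : Set E} {u v : E → ℝ}
  {d m t : ℝ}

theorem smul_set_eq_of_forall_smul_mem_iff (hS : ∀ r : ℝ, 0 < r → ∀ x, r • x ∈ S ↔ x ∈ S)
    {r : ℝ} (hr : 0 < r) : r • S = S := by
  ext x
  rw [Set.mem_smul_set_iff_inv_smul_mem₀ hr.ne', hS _ (inv_pos.2 hr)]

theorem mul_exp_neg_comp_rpow_inv_smul (hm : m ≠ 0)
    (hu : ∀ r : ℝ, 0 < r → ∀ x ∈ S, u (r • x) = r ^ d * u x)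
    (hv : ∀ r : ℝ, 0 < r → ∀ x ∈ S, v (r • x) = r ^ m * v x) (ht : 0 < t) {x : E} (hx : x ∈ S) :
    u (t ^ m⁻¹ • x) * exp (-v (t ^ m⁻¹ • x)) = t ^ (d / m) * (u x * exp (-(t * v x))) := by
  have hr : 0 < t ^ m⁻¹ := rpow_pos_of_pos ht _
  rw [hu _ hr x hx, hv _ hr x hx, ← rpow_mul ht.le, ← rpow_mul ht.le, inv_mul_cancel₀ hm,
    rpow_one, inv_mul_eq_div]
  ring

variable [MeasurableSpace E] [BorelSpace E] [FiniteDimensional ℝ E] {μ : Measure E}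
  [μ.IsAddHaarMeasure]

theorem setIntegral_mul_exp_neg_mul_of_homogeneous (hSm : MeasurableSet S)
    (hS : ∀ r : ℝ, 0 < r → ∀ x, r • x ∈ S ↔ x ∈ S) (hm : m ≠ 0)
    (hu : ∀ r : ℝ, 0 < r → ∀ x ∈ S, u (r • x) = r ^ d * u x)
    (hv : ∀ r : ℝ, 0 < r → ∀ x ∈ S, v (r • x) = r ^ m * v x) (ht : 0 < t) :
    ∫ x in S, u x * exp (-(t * v x)) ∂μ =
      t ^ (-((d + finrank ℝ E) / m)) * ∫ x in S, u x * exp (-v x) ∂μ := by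
  have hr : 0 < t ^ m⁻¹ := rpow_pos_of_pos ht _
  have h := Measure.setIntegral_comp_smul_of_pos μ (fun x => u x * exp (-v x)) S hr
  rw [smul_set_eq_of_forall_smul_mem_iff hS hr,
    setIntegral_congr_fun hSm fun x hx => mul_exp_neg_comp_rpow_inv_smul hm hu hv ht hx,
    integral_const_mul, smul_eq_mul, ← rpow_natCast, ← rpow_mul ht.le, inv_mul_eq_div m] at h
  rw [add_div, neg_add, rpow_add ht, rpow_neg ht.le, rpow_neg ht.le, mul_assoc, ← h]
  field_simp

theorem integrableOn_mul_exp_neg_mul_of_homogeneous (hSm : MeasurableSet S)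
    (hS : ∀ r : ℝ, 0 < r → ∀ x, r • x ∈ S ↔ x ∈ S) (hm : m ≠ 0)
    (hu : ∀ r : ℝ, 0 < r → ∀ x ∈ S, u (r • x) = r ^ d * u x)
    (hv : ∀ r : ℝ, 0 < r → ∀ x ∈ S, v (r • x) = r ^ m * v x)
    (hint : IntegrableOn (fun x => u x * exp (-v x)) S μ) (ht : 0 < t) :
    IntegrableOn (fun x => u x * exp (-(t * v x))) S μ := by
  have hr : 0 < t ^ m⁻¹ := rpow_pos_of_pos ht _
  rw [← integrable_indicator_iff hSm] at hint ⊢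
  refine ((hint.comp_smul hr.ne').const_mul (t ^ (d / m))⁻¹).congr (.of_forall fun x => ?_)
  dsimp only
  by_cases hx : x ∈ S
  · rw [Set.indicator_of_mem ((hS _ hr x).2 hx), Set.indicator_of_mem hx,
      mul_exp_neg_comp_rpow_inv_smul hm hu hv ht hx, inv_mul_cancel_left₀ (by positivity)]
  · rw [Set.indicator_of_notMem (mt (hS _ hr x).1 hx), Set.indicator_of_notMem hx, mul_zero]

theorem setIntegral_mul_mul_exp_neg_of_homogeneous (hSm : MeasurableSet S)
    (hS : ∀ r : ℝ, 0 < r → ∀ x, r • x ∈ S ↔ x ∈ S) (hm : m ≠ 0)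
    (hu_meas : AEStronglyMeasurable u (μ.restrict S))
    (hv_meas : AEStronglyMeasurable v (μ.restrict S)) (hv0 : ∀ x ∈ S, 0 ≤ v x)
    (hu : ∀ r : ℝ, 0 < r → ∀ x ∈ S, u (r • x) = r ^ d * u x)
    (hv : ∀ r : ℝ, 0 < r → ∀ x ∈ S, v (r • x) = r ^ m * v x)
    (hint : IntegrableOn (fun x => u x * exp (-v x)) S μ) :
    ∫ x in S, v x * (u x * exp (-v x)) ∂μ =
      (d + finrank ℝ E) / m * ∫ x in S, u x * exp (-v x) ∂μ :=
  integral_mul_mul_exp_neg_of_rpow_scaling hu_meas hv_meas (ae_restrict_of_forall_mem hSm hv0)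
    (fun _ hs => integrableOn_mul_exp_neg_mul_of_homogeneous hSm hS hm hu hv hint hs)
    (fun _ ht => setIntegral_mul_exp_neg_mul_of_homogeneous hSm hS hm hu hv ht)

end Homogeneous

section Integrability

variable {α : Type*} [MeasurableSpace α] {μ : Measure α} {u v : α → ℝ}

theorem one_add_pow_mul_exp_neg_le {y : ℝ} (hy : 0 ≤ y) (M : ℕ) :
    (1 + y) ^ M * exp (-y) ≤ 2 ^ M * M ! * exp (1 / 2) * exp (-y / 2) := by
  have h := pow_div_factorial_le_exp (x := (1 + y) / 2) (by positivity) M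
  rw [div_le_iff₀ (by positivity), div_pow] at h
  have hsplit : exp ((1 + y) / 2) * exp (-y) = exp (1 / 2) * exp (-y / 2) := by
    rw [← exp_add, ← exp_add]; ring_nf
  calc (1 + y) ^ M * exp (-y) = 2 ^ M * ((1 + y) ^ M / 2 ^ M) * exp (-y) := by field_simp
    _ ≤ 2 ^ M * (exp ((1 + y) / 2) * M !) * exp (-y) := by gcongr
    _ = 2 ^ M * M ! * (exp ((1 + y) / 2) * exp (-y)) := by ring
    _ = 2 ^ M * M ! * exp (1 / 2) * exp (-y / 2) := by rw [hsplit]; ring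

theorem integrable_mul_exp_neg_of_abs_le_pow {C : ℝ} {M : ℕ} (hu : AEStronglyMeasurable u μ)
    (hv : AEStronglyMeasurable v μ) (hv0 : ∀ᵐ x ∂μ, 0 ≤ v x)
    (hbound : ∀ᵐ x ∂μ, |u x| ≤ C * (1 + v x) ^ M)
    (hexp : Integrable (fun x => exp (-v x / 2)) μ) :
    Integrable (fun x => u x * exp (-v x)) μ := by
  refine (hexp.const_mul (C * (2 ^ M * M ! * exp (1 / 2)))).mono'
    (hu.mul (continuous_exp.comp_aestronglyMeasurable hv.neg)) ?_
  filter_upwards [hv0, hbound] with x hx hb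
  have hC : 0 ≤ C := nonneg_of_mul_nonneg_left ((abs_nonneg _).trans hb) (by positivity)
  rw [norm_mul, Real.norm_eq_abs, Real.norm_eq_abs, abs_exp]
  calc |u x| * exp (-v x) ≤ C * ((1 + v x) ^ M * exp (-v x)) := by
        rw [← mul_assoc]; gcongr
    _ ≤ C * (2 ^ M * M ! * exp (1 / 2) * exp (-v x / 2)) := by
        exact mul_le_mul_of_nonneg_left (one_add_pow_mul_exp_neg_le hx M) hC
    _ = C * (2 ^ M * M ! * exp (1 / 2)) * exp (-v x / 2) := by ring

theorem integrable_exp_neg_sum_comp {ι : Type*} [Fintype ι] {ν : Measure ℝ} [SigmaFinite ν]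
    {f : ℝ → ℝ} (h : Integrable (fun y => exp (-f y)) ν) :
    Integrable (fun x : ι → ℝ => exp (-∑ j, f (x j))) (Measure.pi fun _ => ν) := by
  simp_rw [← Finset.sum_neg_distrib, exp_sum]
  exact Integrable.fintype_prod fun _ => h

theorem integrableOn_exp_neg_sum_div_two_Ici {ι : Type*} [Fintype ι] :
    IntegrableOn (fun x : ι → ℝ => exp (-(∑ j, x j) / 2)) (Set.univ.pi fun _ => Set.Ici 0) := by
  have h : IntegrableOn (fun y : ℝ => exp (-(y / 2))) (Set.Ici 0) := by
    simpa [neg_div, div_eq_inv_mul] using (integrableOn_Ici_iff_integrableOn_Ioi).2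
      (exp_neg_integrableOn_Ioi 0 (by norm_num : (0 : ℝ) < 1 / 2))
  rw [IntegrableOn, volume_pi, Measure.restrict_pi_pi]
  simpa [neg_div, Finset.sum_div] using integrable_exp_neg_sum_comp (ι := ι) h

theorem integrable_exp_neg_sum_sq_div_four {ι : Type*} [Fintype ι] :
    Integrable (fun x : ι → ℝ => exp (-((∑ j, x j ^ 2) / 2) / 2)) := by
  have h : Integrable (fun y : ℝ => exp (-(y ^ 2 / 4))) := by
    simpa [neg_div, div_eq_inv_mul] using integrable_exp_neg_mul_sq (by norm_num : (0 : ℝ) < 1 / 4)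
  refine (integrable_exp_neg_sum_comp (ι := ι) h).congr (.of_forall fun x => ?_)
  have hsum : ∑ j, x j ^ 2 / 4 = (∑ j, x j ^ 2) / 2 / 2 := by
    rw [div_div, Finset.sum_div]; norm_num
  simp only [hsum, neg_div]

end Integrability

section Vandermonde

variable {ι : Type*} [Fintype ι] [LinearOrder ι]

def vandermondeProd (x : ι → ℝ) : ℝ :=
  ∏ p ∈ Finset.univ.filter (fun p : ι × ι => p.1 < p.2), (x p.2 - x p.1)

theorem card_filter_fst_lt_snd :
    (Finset.univ.filter (fun p : ι × ι => p.1 < p.2)).card = (Fintype.card ι).choose 2 := by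
  simpa using Finset.card_product_filter_lt (s := (Finset.univ : Finset ι))

@[fun_prop]
theorem continuous_vandermondeProd : Continuous (vandermondeProd (ι := ι)) :=
  continuous_finsetProd _ fun p _ => (continuous_apply p.2).sub (continuous_apply p.1)

theorem vandermondeProd_smul (r : ℝ) (x : ι → ℝ) :
    vandermondeProd (r • x) = r ^ (Fintype.card ι).choose 2 * vandermondeProd x := by
  simp only [vandermondeProd, Pi.smul_apply, smul_eq_mul, ← mul_sub, Finset.prod_mul_distrib,
    Finset.prod_const, card_filter_fst_lt_snd]

theorem abs_vandermondeProd_le {x : ι → ℝ} {R : ℝ} (hx : ∀ j, |x j| ≤ R) :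
    |vandermondeProd x| ≤ (2 * R) ^ (Fintype.card ι).choose 2 := by
  rw [vandermondeProd, Finset.abs_prod, ← card_filter_fst_lt_snd, ← Finset.prod_const]
  refine Finset.prod_le_prod (fun _ _ => abs_nonneg _) fun p _ => ?_
  linarith [abs_sub (x p.2) (x p.1), hx p.1, hx p.2]

theorem vandermondeProd_sq_le {x : ι → ℝ} {R : ℝ} (hx : ∀ j, |x j| ≤ R) :
    vandermondeProd x ^ 2 ≤ 4 ^ (Fintype.card ι).choose 2 * R ^ (2 * (Fintype.card ι).choose 2) :=
  calc vandermondeProd x ^ 2 = |vandermondeProd x| ^ 2 := (sq_abs _).symm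
    _ ≤ ((2 * R) ^ (Fintype.card ι).choose 2) ^ 2 :=
      pow_le_pow_left₀ (abs_nonneg _) (abs_vandermondeProd_le hx) 2
    _ = 4 ^ (Fintype.card ι).choose 2 * R ^ (2 * (Fintype.card ι).choose 2) := by
      rw [← pow_mul, mul_comm _ 2, mul_pow, pow_mul (2 : ℝ)]; norm_num

end Vandermonde

theorem two_mul_choose_two_add_self (n : ℕ) : 2 * (n.choose 2 : ℝ) + n = n ^ 2 := by
  rw [Nat.cast_choose_two]; ring

section Selberg

variable {ι : Type*} [Fintype ι] [LinearOrder ι]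

theorem prod_sqrt_mul_vandermondeProd_sq_smul {r : ℝ} (hr : 0 < r) (x : ι → ℝ) :
    (∏ j, √((r • x) j)) * vandermondeProd (r • x) ^ 2 =
      r ^ ((Fintype.card ι : ℝ) / 2 + (2 * (Fintype.card ι).choose 2 : ℕ)) *
        ((∏ j, √(x j)) * vandermondeProd x ^ 2) := by
  simp only [Pi.smul_apply, smul_eq_mul, sqrt_mul hr.le, Finset.prod_mul_distrib,
    Finset.prod_const, Finset.card_univ, vandermondeProd_smul]
  have hsqrt : √r ^ Fintype.card ι = r ^ ((Fintype.card ι : ℝ) / 2) := by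
    rw [sqrt_eq_rpow, ← rpow_natCast, ← rpow_mul hr.le, one_div_mul_eq_div]
  rw [rpow_add hr, rpow_natCast, hsqrt]
  ring

theorem abs_prod_sqrt_mul_vandermondeProd_sq_le {x : ι → ℝ} (hx : ∀ j, 0 ≤ x j) :
    |(∏ j, √(x j)) * vandermondeProd x ^ 2| ≤
      4 ^ (Fintype.card ι).choose 2 *
        (1 + ∑ j, x j) ^ (Fintype.card ι + 2 * (Fintype.card ι).choose 2) := by
  have hA : 1 ≤ 1 + ∑ j, x j := by linarith [Finset.sum_nonneg fun j (_ : j ∈ Finset.univ) => hx j]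
  have hle (j : ι) : |x j| ≤ 1 + ∑ j, x j := by
    rw [abs_of_nonneg (hx j)]
    linarith [Finset.single_le_sum (fun i _ => hx i) (Finset.mem_univ j)]
  have hsqrt (j : ι) : √(x j) ≤ 1 + ∑ j, x j := by
    rw [sqrt_le_left (by linarith)]
    nlinarith [le_abs_self (x j), hle j]
  have hprod : ∏ j, √(x j) ≤ (1 + ∑ j, x j) ^ Fintype.card ι :=
    (Finset.prod_le_prod (fun j _ => sqrt_nonneg _) fun j _ => hsqrt j).trans_eq
      (Finset.prod_const _)
  rw [abs_of_nonneg (by positivity), pow_add, mul_left_comm]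
  exact mul_le_mul hprod (vandermondeProd_sq_le hle) (sq_nonneg _) (by positivity)

theorem integral_sum_mul_laguerre_selberg :
    ∫ x : ι → ℝ in Set.univ.pi fun _ => Set.Ici 0,
        (∑ j, x j) * ((∏ j, √(x j)) * vandermondeProd x ^ 2 * exp (-∑ j, x j)) =
      ((Fintype.card ι : ℝ) ^ 2 + Fintype.card ι / 2) *
        ∫ x : ι → ℝ in Set.univ.pi fun _ => Set.Ici 0,
          (∏ j, √(x j)) * vandermondeProd x ^ 2 * exp (-∑ j, x j) := by
  set S : Set (ι → ℝ) := Set.univ.pi fun _ => Set.Ici 0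
  have hmemS (x : ι → ℝ) : x ∈ S ↔ ∀ j, 0 ≤ x j := by
    simp only [S, Set.mem_univ_pi, Set.mem_Ici]
  have hSm : MeasurableSet S := .univ_pi fun _ => measurableSet_Ici
  have hS (r : ℝ) (hr : 0 < r) (x : ι → ℝ) : r • x ∈ S ↔ x ∈ S := by
    simp only [hmemS, Pi.smul_apply, smul_eq_mul, mul_nonneg_iff_of_pos_left hr]
  have hv (r : ℝ) (_ : 0 < r) (x : ι → ℝ) (_ : x ∈ S) :
      ∑ j, (r • x) j = r ^ (1 : ℝ) * ∑ j, x j := by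
    simp [Finset.mul_sum]
  have hv0 (x : ι → ℝ) (hx : x ∈ S) : 0 ≤ ∑ j, x j :=
    Finset.sum_nonneg fun j _ => (hmemS x).1 hx j
  have hu_meas : Continuous fun x : ι → ℝ => (∏ j, √(x j)) * vandermondeProd x ^ 2 := by fun_prop
  have hv_meas : Continuous fun x : ι → ℝ => ∑ j, x j := by fun_prop
  have key := setIntegral_mul_mul_exp_neg_of_homogeneous hSm hS one_ne_zero
    hu_meas.aestronglyMeasurable hv_meas.aestronglyMeasurable hv0
    (fun r hr x _ => prod_sqrt_mul_vandermondeProd_sq_smul hr x) hv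
    (integrable_mul_exp_neg_of_abs_le_pow hu_meas.aestronglyMeasurable
      hv_meas.aestronglyMeasurable (ae_restrict_of_forall_mem hSm hv0)
      (ae_restrict_of_forall_mem hSm fun x hx =>
        abs_prod_sqrt_mul_vandermondeProd_sq_le ((hmemS x).1 hx))
      integrableOn_exp_neg_sum_div_two_Ici)
  have hcoef : ((Fintype.card ι : ℝ) / 2 + (2 * (Fintype.card ι).choose 2 : ℕ) +
      finrank ℝ (ι → ℝ)) / 1 = (Fintype.card ι : ℝ) ^ 2 + Fintype.card ι / 2 := by
    rw [finrank_fintype_fun_eq_card, ← two_mul_choose_two_add_self]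
    push_cast
    ring
  rwa [hcoef] at key

theorem integral_sum_sq_mul_hermite_selberg :
    ∫ x : ι → ℝ, (∑ j, x j ^ 2) * (vandermondeProd x ^ 2 * exp (-(∑ j, x j ^ 2) / 2)) =
      (Fintype.card ι : ℝ) ^ 2 *
        ∫ x : ι → ℝ, vandermondeProd x ^ 2 * exp (-(∑ j, x j ^ 2) / 2) := by
  set n := Fintype.card ι
  set N := n.choose 2
  have hu (r : ℝ) (_ : 0 < r) (x : ι → ℝ) (_ : x ∈ Set.univ) :
      vandermondeProd (r • x) ^ 2 = r ^ ((2 * N : ℕ) : ℝ) * vandermondeProd x ^ 2 := by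
    rw [vandermondeProd_smul, rpow_natCast]; ring
  have hv (r : ℝ) (_ : 0 < r) (x : ι → ℝ) (_ : x ∈ Set.univ) :
      (∑ j, (r • x) j ^ 2) / 2 = r ^ (2 : ℝ) * ((∑ j, x j ^ 2) / 2) := by
    simp only [Pi.smul_apply, smul_eq_mul, mul_pow, ← Finset.mul_sum, rpow_two]; ring
  have hbound (x : ι → ℝ) (_ : x ∈ Set.univ) :
      |vandermondeProd x ^ 2| ≤ 4 ^ N * (1 + (∑ j, x j ^ 2) / 2) ^ (2 * N) := by
    refine (abs_of_nonneg (sq_nonneg _)).trans_le (vandermondeProd_sq_le fun j => ?_)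
    have := Finset.single_le_sum (fun i _ => sq_nonneg (x i)) (Finset.mem_univ j)
    nlinarith [sq_nonneg (|x j| - 1), sq_abs (x j)]
  have hu_meas : Continuous fun x : ι → ℝ => vandermondeProd x ^ 2 := by fun_prop
  have hv_meas : Continuous fun x : ι → ℝ => (∑ j, x j ^ 2) / 2 := by fun_prop
  have hv0 (x : ι → ℝ) (_ : x ∈ Set.univ) : 0 ≤ (∑ j, x j ^ 2) / 2 := by positivity
  have key := setIntegral_mul_mul_exp_neg_of_homogeneous MeasurableSet.univ (by simp)
    two_ne_zero hu_meas.aestronglyMeasurable hv_meas.aestronglyMeasurable hv0 hu hv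
    (integrable_mul_exp_neg_of_abs_le_pow hu_meas.aestronglyMeasurable
      hv_meas.aestronglyMeasurable (ae_restrict_of_forall_mem .univ hv0)
      (ae_restrict_of_forall_mem .univ hbound) integrable_exp_neg_sum_sq_div_four.integrableOn)
  rw [Measure.restrict_univ, finrank_fintype_fun_eq_card] at key
  simp only [neg_div] at key ⊢
  calc ∫ x, (∑ j, x j ^ 2) * (vandermondeProd x ^ 2 * exp (-((∑ j, x j ^ 2) / 2)))
      = 2 * ∫ x, (∑ j, x j ^ 2) / 2 * (vandermondeProd x ^ 2 * exp (-((∑ j, x j ^ 2) / 2))) := by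
        rw [← integral_const_mul]; congr 1 with x; ring
    _ = (n : ℝ) ^ 2 * ∫ x, vandermondeProd x ^ 2 * exp (-((∑ j, x j ^ 2) / 2)) := by
        rw [key, ← two_mul_choose_two_add_self]; push_cast; ring

end Selberg

theorem selberg_aomoto_evaluations_general (k : ℕ) :
    (∫ x : Fin k → ℝ in Set.univ.pi fun _ : Fin k => Set.Ici (0 : ℝ),
        (∑ j, x j) *
          ((∏ j, Real.sqrt (x j)) *
            (∏ p ∈ Finset.univ.filter (fun p : Fin k × Fin k => p.1 < p.2),
              (x p.2 - x p.1)) ^ 2 *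
            Real.exp (-∑ j, x j))) =
      ((k : ℝ) ^ 2 + (k : ℝ) / 2) *
        ∫ x : Fin k → ℝ in Set.univ.pi fun _ : Fin k => Set.Ici (0 : ℝ),
          ((∏ j, Real.sqrt (x j)) *
            (∏ p ∈ Finset.univ.filter (fun p : Fin k × Fin k => p.1 < p.2),
              (x p.2 - x p.1)) ^ 2 *
            Real.exp (-∑ j, x j)) ∧
    (∫ x : Fin k → ℝ,
        (∑ j, x j ^ 2) *
          ((∏ p ∈ Finset.univ.filter (fun p : Fin k × Fin k => p.1 < p.2),
              (x p.2 - x p.1)) ^ 2 *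
            Real.exp (-(∑ j, x j ^ 2) / 2))) =
      (k : ℝ) ^ 2 *
        ∫ x : Fin k → ℝ,
          ((∏ p ∈ Finset.univ.filter (fun p : Fin k × Fin k => p.1 < p.2),
              (x p.2 - x p.1)) ^ 2 *
            Real.exp (-(∑ j, x j ^ 2) / 2)) := by
  have laguerre := integral_sum_mul_laguerre_selberg (ι := Fin k)
  have hermite := integral_sum_sq_mul_hermite_selberg (ι := Fin k)
  rw [Fintype.card_fin] at laguerre hermite
  exact ⟨laguerre, hermite⟩

/-- Proposition `prop:selberg_sum_squarded_average`: Aomoto-type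
evaluations for the Selberg integrals with Laguerre weight (on `[0,∞)^k`) and Hermite
weight (on `ℝ^k`). -/
theorem selberg_aomoto_evaluations (k : ℕ) (hk : 0 < k) :
    (∫ x : Fin k → ℝ in Set.univ.pi fun _ : Fin k => Set.Ici (0 : ℝ),
        (∑ j, x j) *
          ((∏ j, Real.sqrt (x j)) *
            (∏ p ∈ Finset.univ.filter (fun p : Fin k × Fin k => p.1 < p.2),
              (x p.2 - x p.1)) ^ 2 *
            Real.exp (-∑ j, x j))) =
      ((k : ℝ) ^ 2 + (k : ℝ) / 2) *
        ∫ x : Fin k → ℝ in Set.univ.pi fun _ : Fin k => Set.Ici (0 : ℝ),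
          ((∏ j, Real.sqrt (x j)) *
            (∏ p ∈ Finset.univ.filter (fun p : Fin k × Fin k => p.1 < p.2),
              (x p.2 - x p.1)) ^ 2 *
            Real.exp (-∑ j, x j)) ∧
    (∫ x : Fin k → ℝ,
        (∑ j, x j ^ 2) *
          ((∏ p ∈ Finset.univ.filter (fun p : Fin k × Fin k => p.1 < p.2),
              (x p.2 - x p.1)) ^ 2 *
            Real.exp (-(∑ j, x j ^ 2) / 2))) =
      (k : ℝ) ^ 2 *
        ∫ x : Fin k → ℝ,
          ((∏ p ∈ Finset.univ.filter (fun p : Fin k × Fin k => p.1 < p.2),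
              (x p.2 - x p.1)) ^ 2 *
            Real.exp (-(∑ j, x j ^ 2) / 2)) :=
  selberg_aomoto_evaluations_general k
end
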